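/- arXiv:1205.3907 — 6 statements merged into one kernel-verified Lean document; each statement's English description precedes it below -/
import Mathlib

section
/- Let p be a prime, d ≥ 1 and k ≥ 0. The element f = Σ_{i=0}^{p−1} (1+T_1)^{i·p^k} of Λ = ℤ_p[[T_1,…,T_d]] (the p^{k+1}-st cyclotomic polynomial evaluated at 1+T_1) is irreducible in Λ. -/
/-- the element `f = Σ_{i=0}^{p−1} (1+T_1)^(i·p^k)` (the `p^(k+1)`-st
cyclotomic polynomial evaluated at `1+T_1`) is irreducible in `Λ = ℤ_p[[T_1,…,T_d]]`. -/
theorem stmt2 (p d k : ℕ) [Fact p.Prime] (hd : 1 ≤ d) :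
    Irreducible (∑ i ∈ Finset.range p,
      (1 + MvPowerSeries.X (⟨0, hd⟩ : Fin d)) ^ (i * p ^ k) :
        MvPowerSeries (Fin d) ℤ_[p]) := by
  set f : MvPowerSeries (Fin d) ℤ_[p] :=
    ∑ i ∈ Finset.range p, (1 + MvPowerSeries.X (⟨0, hd⟩ : Fin d)) ^ (i * p ^ k) with hf
  have hc : MvPowerSeries.constantCoeff (σ := Fin d) (R := ℤ_[p]) f = p := by
    rw [hf, map_sum]
    simp
  have hp : Irreducible ((p : ℤ_[p])) := PadicInt.prime_p.irreducible
  constructor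
  · intro hu
    exact hp.not_isUnit (hc ▸ (MvPowerSeries.isUnit_iff_constantCoeff.mp hu))
  · intro a b hab
    have h2 : MvPowerSeries.constantCoeff (σ := Fin d) (R := ℤ_[p]) a *
        MvPowerSeries.constantCoeff (σ := Fin d) (R := ℤ_[p]) b = p := by
      rw [← map_mul, ← hab, hc]
    rcases hp.isUnit_or_isUnit h2.symm with h | h
    · exact Or.inl (MvPowerSeries.isUnit_iff_constantCoeff.mpr h)
    · exact Or.inr (MvPowerSeries.isUnit_iff_constantCoeff.mpr h)
end

section
/- Let R be a commutative Noetherian ring and let (Λ_n)_{n∈ℕ} be an inverse system of R-modules with surjective R-linear transition maps Λ_{n+1} → Λ_n, where each Λ_n is a finite free R-module. Let lim Λ_n denote the inverse limit, realized as the R-submodule of Π_n Λ_n consisting of compatible families, and similarly for lim(Λ_n ⊗_R W). Then for every finitely generated R-module W, the natural R-linear map (lim Λ_n) ⊗_R W → lim(Λ_n ⊗_R W), induced componentwise by the projections lim Λ_n → Λ_n, is bijective. -/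
open scoped TensorProduct

open scoped TensorProduct
open LinearMap

namespace Stmt3Aux

variable {R : Type*} [CommRing R]

def invLim (M : ℕ → Type*) [∀ n, AddCommGroup (M n)] [∀ n, Module R (M n)]
    (g : ∀ n : ℕ, M (n + 1) →ₗ[R] M n) : Submodule R (∀ n, M n) where
  carrier := {x | ∀ n, g n (x (n + 1)) = x n}
  add_mem' := fun ha hb n => by simp [ha n, hb n]
  zero_mem' := fun n => by simp
  smul_mem' := fun c x hx n => by simp [hx n]

variable (L : ℕ → Type*) [∀ n, AddCommGroup (L n)] [∀ n, Module R (L n)]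
variable (f : ∀ n : ℕ, L (n + 1) →ₗ[R] L n)

noncomputable def eta (W : Type*) [AddCommGroup W] [Module R W] :
    (↥(invLim L f) ⊗[R] W) →ₗ[R] ∀ n, L n ⊗[R] W :=
  LinearMap.pi fun n => LinearMap.rTensor W
    ((LinearMap.proj n).comp (invLim L f).subtype)

lemma eta_tmul {W : Type*} [AddCommGroup W] [Module R W] (x : ↥(invLim L f)) (w : W) (n : ℕ) :
    eta L f W (x ⊗ₜ w) n = (x : ∀ m, L m) n ⊗ₜ w := rfl


lemma eta_mem {W : Type*} [AddCommGroup W] [Module R W] (t : ↥(invLim L f) ⊗[R] W) :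
    eta L f W t ∈ invLim (fun n => L n ⊗[R] W) (fun n => LinearMap.rTensor W (f n)) := by
  induction t using TensorProduct.induction_on with
  | zero => simp only [map_zero]; exact Submodule.zero_mem _
  | tmul x w =>
    intro n
    simp only [eta_tmul, rTensor_tmul]
    rw [x.2 n]
  | add a b ha hb =>
    rw [map_add]; exact Submodule.add_mem _ ha hb

lemma eta_nat {W W' : Type*} [AddCommGroup W] [Module R W] [AddCommGroup W'] [Module R W']
    (φ : W →ₗ[R] W') (t : ↥(invLim L f) ⊗[R] W) (n : ℕ) :
    eta L f W' (LinearMap.lTensor _ φ t) n = LinearMap.lTensor (L n) φ (eta L f W t n) := by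
  induction t using TensorProduct.induction_on with
  | zero => simp
  | tmul x w => simp [eta_tmul]
  | add a b ha hb => simp only [map_add, Pi.add_apply, ha, hb]

variable (ι : Type*) [Fintype ι] [DecidableEq ι]

lemma pSR_eta (t : ↥(invLim L f) ⊗[R] (ι → R)) (n : ℕ) (i : ι) :
    TensorProduct.piScalarRight R R (L n) ι (eta L f (ι → R) t n) i
      = ((TensorProduct.piScalarRight R R (↥(invLim L f)) ι t i : ↥(invLim L f)) : ∀ m, L m) n := by
  induction t using TensorProduct.induction_on with
  | zero => simp
  | tmul x w => simp [eta_tmul]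
  | add a b ha hb => simp only [map_add, Pi.add_apply, ha, hb, Submodule.coe_add]

lemma pSR_rT (n : ℕ) (z : L (n + 1) ⊗[R] (ι → R)) (i : ι) :
    TensorProduct.piScalarRight R R (L n) ι (LinearMap.rTensor (ι → R) (f n) z) i
      = f n (TensorProduct.piScalarRight R R (L (n + 1)) ι z i) := by
  induction z using TensorProduct.induction_on with
  | zero => simp
  | tmul x w => simp
  | add a b ha hb => simp only [map_add, Pi.add_apply, ha, hb]

lemma eta_free_inj : Function.Injective (eta L f (ι → R)) := by
  rw [injective_iff_map_eq_zero]
  intro t h0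
  have h : ∀ i, TensorProduct.piScalarRight R R (↥(invLim L f)) ι t i = 0 := by
    intro i
    ext n
    rw [← pSR_eta, h0]
    simp
  have : TensorProduct.piScalarRight R R (↥(invLim L f)) ι t = 0 := funext h
  have := (TensorProduct.piScalarRight R R (↥(invLim L f)) ι).injective
    (this.trans (map_zero _).symm)
  simpa using this

lemma eta_free_surj (y : ∀ n, L n ⊗[R] (ι → R))
    (hy : y ∈ invLim (fun n => L n ⊗[R] (ι → R)) (fun n => LinearMap.rTensor _ (f n))) :
    ∃ t, eta L f (ι → R) t = y := by
  have hv : ∀ i, (fun n => TensorProduct.piScalarRight R R (L n) ι (y n) i) ∈ invLim L f := by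
    intro i n
    rw [← pSR_rT, hy n]
  refine ⟨(TensorProduct.piScalarRight R R (↥(invLim L f)) ι).symm
    (fun i => ⟨_, hv i⟩), ?_⟩
  funext n
  apply (TensorProduct.piScalarRight R R (L n) ι).injective
  funext i
  rw [pSR_eta, LinearEquiv.apply_symm_apply]


section
variable [∀ n, Module.Free R (L n)]
variable {W : Type*} [AddCommGroup W] [Module R W]

lemma lift_step (hf : ∀ n, Function.Surjective (f n)) (p : (ι → R) →ₗ[R] W) (hp : Function.Surjective p)
    (n : ℕ) (zn : L n ⊗[R] (ι → R)) (yn1 : L (n + 1) ⊗[R] W)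
    (h : LinearMap.rTensor W (f n) yn1 = LinearMap.lTensor (L n) p zn) :
    ∃ z', LinearMap.lTensor (L (n + 1)) p z' = yn1 ∧
      LinearMap.rTensor (ι → R) (f n) z' = zn := by
  obtain ⟨z₀, hz₀⟩ := LinearMap.lTensor_surjective (L (n + 1)) hp yn1
  set d := LinearMap.rTensor (ι → R) (f n) z₀ - zn with hd_def
  have comm : LinearMap.lTensor (L n) p (LinearMap.rTensor (ι → R) (f n) z₀)
      = LinearMap.rTensor W (f n) (LinearMap.lTensor (L (n + 1)) p z₀) := by
    rw [← LinearMap.comp_apply, ← LinearMap.comp_apply, LinearMap.lTensor_comp_rTensor,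
      LinearMap.rTensor_comp_lTensor]
  have hd : LinearMap.lTensor (L n) p d = 0 := by
    rw [hd_def, map_sub, comm, hz₀, h, sub_self]
  have hex : Function.Exact (LinearMap.lTensor (L n) (LinearMap.ker p).subtype)
      (LinearMap.lTensor (L n) p) :=
    Module.Flat.lTensor_exact (L n) (LinearMap.exact_subtype_ker_map p)
  obtain ⟨e, he⟩ := (hex d).mp hd
  obtain ⟨e', he'⟩ := LinearMap.rTensor_surjective (↥(LinearMap.ker p)) (hf n) e
  refine ⟨z₀ - LinearMap.lTensor (L (n + 1)) (LinearMap.ker p).subtype e', ?_, ?_⟩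
  · rw [map_sub, hz₀, ← LinearMap.comp_apply, ← LinearMap.lTensor_comp]
    have hps : p ∘ₗ (LinearMap.ker p).subtype = 0 := by
      ext k; simp
    rw [hps, LinearMap.lTensor_zero]
    simp
  · have comm2 : LinearMap.rTensor (ι → R) (f n)
        (LinearMap.lTensor (L (n + 1)) (LinearMap.ker p).subtype e')
        = LinearMap.lTensor (L n) (LinearMap.ker p).subtype
          (LinearMap.rTensor (↥(LinearMap.ker p)) (f n) e') := by
      rw [← LinearMap.comp_apply, ← LinearMap.comp_apply, LinearMap.rTensor_comp_lTensor,
        LinearMap.lTensor_comp_rTensor]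
    rw [map_sub, comm2, he', he, hd_def, sub_sub_cancel]


lemma eta_surj (hf : ∀ n, Function.Surjective (f n)) [Module.Finite R W]
    (y : ∀ n, L n ⊗[R] W)
    (hy : y ∈ invLim (fun n => L n ⊗[R] W) (fun n => LinearMap.rTensor W (f n))) :
    ∃ t, eta L f W t = y := by
  obtain ⟨a, p, hp⟩ := Module.Finite.exists_fin' R W
  have kstep : ∀ n (zn : L n ⊗[R] (Fin a → R)), LinearMap.lTensor (L n) p zn = y n →
      ∃ z', LinearMap.lTensor (L (n + 1)) p z' = y (n + 1) ∧
        LinearMap.rTensor (Fin a → R) (f n) z' = zn := by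
    intro n zn h
    exact lift_step L f (Fin a) hf p hp n zn (y (n + 1)) (by rw [hy n, h])
  choose step h1 h2 using kstep
  obtain ⟨z0, hz0⟩ := LinearMap.lTensor_surjective (L 0) hp (y 0)
  let q : ∀ n, {z : L n ⊗[R] (Fin a → R) // LinearMap.lTensor (L n) p z = y n} :=
    fun n => Nat.rec ⟨z0, hz0⟩ (fun n zn => ⟨step n zn.1 zn.2, h1 n zn.1 zn.2⟩) n
  have hq : ∀ n, LinearMap.rTensor (Fin a → R) (f n) (q (n + 1)).1 = (q n).1 :=
    fun n => h2 n (q n).1 (q n).2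
  obtain ⟨s, hs⟩ := eta_free_surj L f (Fin a) (fun n => (q n).1) hq
  refine ⟨LinearMap.lTensor _ p s, ?_⟩
  funext n
  rw [eta_nat L f p s n, hs]
  exact (q n).2


lemma eta_inj [IsNoetherianRing R] (hf : ∀ n, Function.Surjective (f n))
    [Module.Finite R W] : Function.Injective (eta L f W) := by
  obtain ⟨a, p, hp⟩ := Module.Finite.exists_fin' R W
  set K := LinearMap.ker p with hK_def
  haveI : Module.Finite R ↥K := Module.Finite.iff_fg.mpr (IsNoetherian.noetherian K)
  rw [injective_iff_map_eq_zero]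
  intro t ht
  obtain ⟨s, hs⟩ := LinearMap.lTensor_surjective (↥(invLim L f)) hp t
  set z := eta L f (Fin a → R) s with hz_def
  have hz0 : ∀ n, LinearMap.lTensor (L n) p (z n) = 0 := by
    intro n
    rw [hz_def, ← eta_nat L f p s n, hs, ht]
    simp
  have hex : ∀ n, Function.Exact (LinearMap.lTensor (L n) K.subtype)
      (LinearMap.lTensor (L n) p) :=
    fun n => Module.Flat.lTensor_exact (L n) (LinearMap.exact_subtype_ker_map p)
  have hv : ∀ n, ∃ e, LinearMap.lTensor (L n) K.subtype e = z n :=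
    fun n => (hex n (z n)).mp (hz0 n)
  choose v hvz using hv
  have hinj : ∀ n, Function.Injective (LinearMap.lTensor (L n) K.subtype) :=
    fun n => Module.Flat.lTensor_preserves_injective_linearMap _ K.injective_subtype
  have hzc : ∀ n, LinearMap.rTensor (Fin a → R) (f n) (z (n + 1)) = z n :=
    eta_mem L f s
  have hvmem : v ∈ invLim (fun n => L n ⊗[R] ↥K)
      (fun n => LinearMap.rTensor (↥K) (f n)) := by
    intro n
    apply hinj n
    have comm : LinearMap.lTensor (L n) K.subtype
        (LinearMap.rTensor (↥K) (f n) (v (n + 1)))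
        = LinearMap.rTensor (Fin a → R) (f n)
          (LinearMap.lTensor (L (n + 1)) K.subtype (v (n + 1))) := by
      rw [← LinearMap.comp_apply, ← LinearMap.comp_apply, LinearMap.lTensor_comp_rTensor,
        LinearMap.rTensor_comp_lTensor]
    rw [comm, hvz (n + 1), hzc n, hvz n]
  obtain ⟨u, hu⟩ := eta_surj L f hf v hvmem
  have heq : eta L f (Fin a → R) (LinearMap.lTensor (↥(invLim L f)) K.subtype u) = z := by
    funext n
    rw [eta_nat L f K.subtype u n, hu, hvz n]
  have hsu : s = LinearMap.lTensor (↥(invLim L f)) K.subtype u :=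
    eta_free_inj L f (Fin a) (hz_def ▸ heq.symm)
  rw [← hs, hsu, ← LinearMap.comp_apply, ← LinearMap.lTensor_comp]
  have hps : p ∘ₗ K.subtype = 0 := by ext k; simp [hK_def]
  rw [hps, LinearMap.lTensor_zero]
  simp

end
end Stmt3Aux

/-- for an inverse system `(Λ_n)` of finite free modules over a commutative
Noetherian ring `R` with surjective transition maps, and a finitely generated `R`-module `W`,
the natural map `(lim Λ_n) ⊗_R W → lim (Λ_n ⊗_R W)` is bijective.  Here the inverse limits
are realized as the submodules of the corresponding product modules consisting of compatible
families (equivalently, the intersections of the kernels of the maps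
`x ↦ f_n(x_{n+1}) − x_n`), and a linear map `ψ` into the full product which on pure tensors
is induced componentwise by the projections is bijective onto the limit submodule, i.e. `ψ`
is injective with range the limit submodule. -/
theorem stmt3 (R : Type*) [CommRing R] [IsNoetherianRing R]
    (L : ℕ → Type*) [∀ n, AddCommGroup (L n)] [∀ n, Module R (L n)]
    [∀ n, Module.Finite R (L n)] [∀ n, Module.Free R (L n)]
    (f : ∀ n : ℕ, L (n + 1) →ₗ[R] L n) (hf : ∀ n, Function.Surjective (f n))
    (W : Type*) [AddCommGroup W] [Module R W] [Module.Finite R W]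
    (lim : Submodule R (∀ n, L n))
    (hlim : (lim : Set (∀ n, L n)) = {x | ∀ n, f n (x (n + 1)) = x n})
    (limT : Submodule R (∀ n, L n ⊗[R] W))
    (hlimT : (limT : Set (∀ n, L n ⊗[R] W)) =
      {y | ∀ n, LinearMap.rTensor W (f n) (y (n + 1)) = y n})
    (ψ : (↥lim ⊗[R] W) →ₗ[R] ∀ n, L n ⊗[R] W)
    (hψ : ∀ (x : ↥lim) (w : W) (n : ℕ), ψ (x ⊗ₜ[R] w) n = (x : ∀ n, L n) n ⊗ₜ[R] w) :
    Function.Injective ψ ∧ LinearMap.range ψ = limT := by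
  have hlim' : lim = Stmt3Aux.invLim L f := SetLike.coe_injective (by rw [hlim]; rfl)
  subst hlim'
  have hlimT' : limT = Stmt3Aux.invLim (fun n => L n ⊗[R] W)
      (fun n => LinearMap.rTensor W (f n)) := SetLike.coe_injective (by rw [hlimT]; rfl)
  subst hlimT'
  have hψη : ψ = Stmt3Aux.eta L f W := by
    apply TensorProduct.ext'
    intro x w
    funext n
    rw [hψ]
    exact (Stmt3Aux.eta_tmul L f x w n).symm
  subst hψη
  refine ⟨Stmt3Aux.eta_inj L f hf, le_antisymm ?_ ?_⟩
  · rintro y ⟨t, rfl⟩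
    exact Stmt3Aux.eta_mem L f t
  · intro y hy
    obtain ⟨t, ht⟩ := Stmt3Aux.eta_surj L f hf y hy
    exact ⟨t, ht⟩
end

section
/- Let R be a commutative integral domain and t ∈ R an element such that the quotient ring R/(t) is also an integral domain. Let M be a finitely generated R-module. If M/tM is a torsion module over R/(t) (i.e., every element of M/tM is annihilated by some nonzero element of R/(t)), then M is a torsion R-module (every element of M is annihilated by some nonzero element of R). -/
/-- let `R` be a domain and `t ∈ R` with `R/(t)` a domain.  If `M` is a finitely
generated `R`-module such that `M/tM` is torsion over `R/(t)` (every element is killed by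
some element of `R` which is nonzero modulo `(t)`), then `M` is a torsion `R`-module. -/
theorem stmt4 (R : Type*) [CommRing R] [IsDomain R] (t : R)
    [IsDomain (R ⧸ Ideal.span {t})]
    (M : Type*) [AddCommGroup M] [Module R M] [Module.Finite R M]
    (h : ∀ x : M ⧸ (Ideal.span {t} • ⊤ : Submodule R M),
      ∃ s : R, Ideal.Quotient.mk (Ideal.span {t}) s ≠ 0 ∧ s • x = 0) :
    ∀ x : M, ∃ s : R, s ≠ 0 ∧ s • x = 0 := by
  classical
  set p : Ideal R := Ideal.span {t} with hpdef
  have hp : p.IsPrime := (Ideal.Quotient.isDomain_iff_prime p).mp inferInstance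
  set N : Submodule R M := p • ⊤ with hNdef
  -- For each m : M choose an annihilator of its class mod N
  choose g hg1 hg2 using fun m : M => h (Submodule.Quotient.mk m)
  have hg1' : ∀ m : M, g m ∉ p := by
    intro m hm
    exact hg1 m (Ideal.Quotient.eq_zero_iff_mem.mpr hm)
  have hg2' : ∀ m : M, g m • m ∈ N := by
    intro m
    have := hg2 m
    rw [← Submodule.Quotient.mk_smul, Submodule.Quotient.mk_eq_zero] at this
    exact this
  -- finitely many generators
  obtain ⟨S, hS⟩ := Module.Finite.fg_top (R := R) (M := M)
  set s : R := ∏ m ∈ S, g m with hsdef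
  have hs : s ∉ p := by
    refine Finset.prod_induction g (· ∉ p)
      (fun a b ha hb hab => (hp.mem_or_mem hab).elim ha hb)
      (fun h1 => hp.ne_top (Ideal.eq_top_iff_one p |>.mpr h1)) ?_
    exact fun m _ => hg1' m
  -- s • M ⊆ N
  have hsN : ∀ y : M, s • y ∈ N := by
    have : Submodule.span R (S : Set M) ≤ Submodule.comap (LinearMap.lsmul R M s) N := by
      rw [Submodule.span_le]
      intro m hm
      show s • m ∈ N
      rw [hsdef, ← Finset.mul_prod_erase S g hm, mul_comm, mul_smul]
      exact N.smul_mem _ (hg2' m)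
    intro y
    have hy : y ∈ Submodule.span R (S : Set M) := by rw [hS]; trivial
    exact this hy
  -- Cayley-Hamilton
  have hrange : LinearMap.range (algebraMap R (Module.End R M) s) ≤ N := by
    rintro _ ⟨y, rfl⟩
    rw [Module.algebraMap_end_apply]
    exact hsN y
  obtain ⟨q, hqm, -, hqc, hq0⟩ :=
    LinearMap.exists_monic_and_coeff_mem_pow_and_aeval_eq_zero_of_range_le_smul (R := R) (M := M)
      (algebraMap R (Module.End R M) s) p hrange
  have hev : ∀ y : M, (Polynomial.eval s q) • y = 0 := by
    intro y
    have : Polynomial.aeval (algebraMap R (Module.End R M) s) q y = (0 : Module.End R M) y := by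
      rw [hq0]
    rwa [Polynomial.aeval_algebraMap_apply_eq_algebraMap_eval,
      Module.algebraMap_end_apply, LinearMap.zero_apply] at this
  -- eval s q ∉ p
  set n := q.natDegree with hn
  have hsum : Polynomial.eval s q = (∑ k ∈ Finset.range n, q.coeff k * s ^ k) + s ^ n := by
    rw [Polynomial.eval_eq_sum_range, Finset.sum_range_succ, hqm.coeff_natDegree, one_mul]
  have hne : Polynomial.eval s q ∉ p := by
    intro hmem
    have h1 : (∑ k ∈ Finset.range n, q.coeff k * s ^ k) ∈ p := by
      refine Ideal.sum_mem _ fun k hk => Ideal.mul_mem_right _ _ ?_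
      have hk' : n - k ≠ 0 := Nat.sub_ne_zero_of_lt (Finset.mem_range.mp hk)
      exact Ideal.pow_le_self hk' (hqc k)
    have h2 : s ^ n ∈ p := by
      have := Ideal.sub_mem p hmem h1
      rwa [hsum, add_sub_cancel_left] at this
    exact hs (hp.mem_of_pow_mem n h2)
  intro x
  exact ⟨Polynomial.eval s q, fun h0 => hne (h0 ▸ p.zero_mem), hev x⟩
end

section
/- Let p be a prime and let D be a torsion abelian p-group whose p-torsion subgroup D[p] is finite. Let ψ be an automorphism of D whose fixed-point subgroup D^ψ is finite, and let D_div = ⋂_{n≥1} p^n·D be the maximal divisible subgroup of D. Then the quotient D/(ψ−1)D is finite and its cardinality equals |D^ψ| / |D^ψ ∩ D_div|. -/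
namespace Stmt6Aux

variable {D : Type*} [AddCommGroup D]

/-- multiplication by `n` as an additive hom -/
def mu (n : ℕ) (D : Type*) [AddCommGroup D] : D →+ D :=
  AddMonoidHom.mk' (fun x => n • x) (fun a b => smul_add n a b)

@[simp] lemma mu_apply (n : ℕ) (x : D) : mu n D x = n • x := rfl

/-- `p^n`-torsion subgroup -/
def T (p n : ℕ) (D : Type*) [AddCommGroup D] : AddSubgroup D := (mu (p ^ n) D).ker

lemma mem_T {p n : ℕ} {x : D} : x ∈ T p n D ↔ p ^ n • x = 0 := Iff.rfl

/-- image of multiplication by `p^n` -/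
def R (p n : ℕ) (D : Type*) [AddCommGroup D] : AddSubgroup D := (mu (p ^ n) D).range

lemma mem_R {p n : ℕ} {x : D} : x ∈ R p n D ↔ ∃ y, p ^ n • y = x := Iff.rfl

lemma T_finite (p : ℕ) (hDp : {x : D | p • x = 0}.Finite) :
    ∀ n, ((T p n D : Set D)).Finite := by
  intro n
  induction n with
  | zero =>
    have : (T p 0 D : Set D) ⊆ {(0 : D)} := by
      intro x hx
      have : p ^ 0 • x = 0 := hx
      simpa using this
    exact (Set.finite_singleton 0).subset this
  | succ n ih =>
    have hsub : (T p (n+1) D : Set D) ⊆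
        ⋃ y ∈ {x : D | p • x = 0}, {x : D | p ^ n • x = y} := by
      intro x hx
      have hx' : p ^ (n+1) • x = 0 := hx
      refine Set.mem_biUnion (show p • (p ^ n • x) = 0 by
        rw [smul_smul, ← pow_succ']; exact hx') rfl
    refine Set.Finite.subset (Set.Finite.biUnion hDp ?_) hsub
    intro y _
    rcases Set.eq_empty_or_nonempty {x : D | p ^ n • x = y} with h | ⟨x₀, hx₀⟩
    · simp [h]
    · have : {x : D | p ^ n • x = y} ⊆ (fun z => x₀ + z) '' (T p n D : Set D) := by
        intro x hx
        refine ⟨x - x₀, ?_, by simp⟩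
        show x - x₀ ∈ T p n D
        rw [mem_T, smul_sub, hx.out, hx₀.out, sub_self]
      exact ((ih.image _).subset this)

lemma finite_of_finite_quot {G : Type*} [AddCommGroup G] (N : AddSubgroup G)
    (h1 : Finite N) (h2 : Finite (G ⧸ N)) : Finite G := by
  have hmem : ∀ g : G, g - (QuotientAddGroup.mk g : G ⧸ N).out ∈ N := by
    intro g
    rw [← QuotientAddGroup.eq_iff_sub_mem]
    exact (QuotientAddGroup.out_eq' _).symm
  refine Finite.of_injective
    (fun g : G => ((QuotientAddGroup.mk g : G ⧸ N),
      (⟨g - (QuotientAddGroup.mk g : G ⧸ N).out, hmem g⟩ : N))) ?_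
  intro a b hab
  simp only [Prod.mk.injEq, Subtype.mk.injEq] at hab
  obtain ⟨h1', h2'⟩ := hab
  rw [h1'] at h2'
  exact sub_left_injective h2'

lemma card_ker_mul_card_range {G H : Type*} [AddCommGroup G] [AddCommGroup H]
    (f : G →+ H) : Nat.card G = Nat.card f.ker * Nat.card f.range := by
  rw [AddSubgroup.card_eq_card_quotient_mul_card_addSubgroup f.ker,
    Nat.card_congr (QuotientAddGroup.quotientKerEquivRange f).toEquiv, mul_comm]

lemma finite_of_hom {G H : Type*} [AddCommGroup G] [AddCommGroup H]
    (f : G →+ H) (hH : Finite H) (hk : Finite f.ker) : Finite G := by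
  have : Finite (G ⧸ f.ker) :=
    Finite.of_equiv _ (QuotientAddGroup.quotientKerEquivRange f).symm.toEquiv
  exact finite_of_finite_quot f.ker hk this


lemma closure_le_T (p : ℕ) (htors : ∀ x : D, ∃ n : ℕ, p ^ n • x = 0) (X : Finset D) :
    ∃ M : ℕ, AddSubgroup.closure (X : Set D) ≤ T p M D := by
  choose f hf using htors
  refine ⟨X.sup f, (AddSubgroup.closure_le _).mpr ?_⟩
  intro x hx
  show p ^ X.sup f • x = 0
  have hle : f x ≤ X.sup f := Finset.le_sup hx
  rw [← Nat.sub_add_cancel hle, pow_add, mul_smul, hf x, smul_zero]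

lemma finQ1 (p : ℕ) (htors : ∀ x : D, ∃ n : ℕ, p ^ n • x = 0)
    (hDp : {x : D | p • x = 0}.Finite) : Finite (D ⧸ R p 1 D) := by
  have hT : ∀ n, ((T p n D : Set D)).Finite := T_finite p hDp
  have hT1 : Finite (T p 1 D) := (hT 1).to_subtype
  set s := Nat.card (T p 1 D) with hs
  by_contra hinf
  rw [not_finite_iff_infinite] at hinf
  obtain ⟨F, hF⟩ := Infinite.exists_subset_card_eq (D ⧸ R p 1 D) (s + 1)
  suffices h : F.card ≤ s by omega
  classical
  set X : Finset D := F.image (fun q => q.out) with hX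
  obtain ⟨M, hM⟩ := closure_le_T p htors X
  set A := AddSubgroup.closure (X : Set D) with hA
  have hAfin : Finite A := ((hT M).subset hM).to_subtype
  set π := QuotientAddGroup.mk' (R p 1 D) with hπ
  set ρ := π.comp A.subtype with hρ
  have hρfin : Finite ρ.range :=
    Finite.of_surjective ρ.rangeRestrict ρ.rangeRestrict_surjective
  have hFsub : ∀ q ∈ F, q ∈ ρ.range := by
    intro q hq
    have hqout : q.out ∈ A := AddSubgroup.subset_closure
      (Finset.mem_coe.mpr (Finset.mem_image.mpr ⟨q, hq, rfl⟩))
    exact ⟨⟨q.out, hqout⟩, QuotientAddGroup.out_eq' q⟩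
  have hcard1 : F.card ≤ Nat.card ρ.range := by
    rw [← Nat.card_eq_finsetCard F]
    exact Nat.card_le_card_of_injective
      (fun q : {x : D ⧸ R p 1 D // x ∈ F} => (⟨q.1, hFsub q.1 q.2⟩ : ↥ρ.range))
      (fun a b hab => Subtype.ext (Subtype.mk_eq_mk.mp hab))
  set μ := mu p ↥A with hμ
  have h1 : Nat.card ↥A = Nat.card μ.ker * Nat.card μ.range :=
    card_ker_mul_card_range μ
  have h2 : Nat.card ↥A = Nat.card ρ.ker * Nat.card ρ.range :=
    card_ker_mul_card_range ρ
  have hsub2 : μ.range ≤ ρ.ker := by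
    rintro a ⟨b, rfl⟩
    have hval : A.subtype (μ b) = p • (b : D) := by
      rw [hμ, mu_apply, map_nsmul]; rfl
    show π (A.subtype (μ b)) = 0
    rw [hval, QuotientAddGroup.mk'_apply, QuotientAddGroup.eq_zero_iff]
    exact ⟨(b : D), by simp [pow_one]⟩
  have hμk : Nat.card μ.ker ≤ s := by
    rw [hs]
    refine Nat.card_le_card_of_injective
      (fun a => (⟨((a : ↥A) : D), ?_⟩ : ↥(T p 1 D))) ?_
    · show p ^ 1 • ((a : ↥A) : D) = 0
      rw [pow_one]
      have h0 : μ (a : ↥A) = 0 := a.2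
      exact congrArg Subtype.val h0
    · intro a b hab
      exact Subtype.ext (Subtype.ext (Subtype.mk_eq_mk.mp hab))
  have hrμkρ : Nat.card μ.range ≤ Nat.card ρ.ker :=
    Nat.card_le_card_of_injective (AddSubgroup.inclusion hsub2)
      (AddSubgroup.inclusion_injective hsub2)
  have hkρpos : 0 < Nat.card ρ.ker := Nat.card_pos
  have : Nat.card ρ.ker * Nat.card ρ.range ≤ Nat.card ρ.ker * Nat.card μ.ker := by
    calc Nat.card ρ.ker * Nat.card ρ.range = Nat.card μ.ker * Nat.card μ.range := by
          rw [← h1, ← h2]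
      _ ≤ Nat.card μ.ker * Nat.card ρ.ker := Nat.mul_le_mul_left _ hrμkρ
      _ = Nat.card ρ.ker * Nat.card μ.ker := mul_comm _ _
  have hfinal : Nat.card ρ.range ≤ Nat.card μ.ker :=
    Nat.le_of_mul_le_mul_left this hkρpos
  exact le_trans hcard1 (le_trans hfinal hμk)


lemma R_succ_le (p n : ℕ) : R p (n+1) D ≤ R p n D := by
  rintro x ⟨y, rfl⟩
  exact ⟨p • y, by simp [pow_succ, mul_smul]⟩

lemma R_le_of_le (p : ℕ) {m n : ℕ} (h : m ≤ n) : R p n D ≤ R p m D := by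
  induction n with
  | zero => rw [Nat.le_zero.mp h]
  | succ n ih =>
    rcases Nat.lt_or_ge m (n+1) with h' | h'
    · exact le_trans (R_succ_le p n) (ih (Nat.lt_succ_iff.mp h'))
    · rw [Nat.le_antisymm h h']

lemma finQn (p : ℕ) (htors : ∀ x : D, ∃ n : ℕ, p ^ n • x = 0)
    (hDp : {x : D | p • x = 0}.Finite) : ∀ n, Finite (D ⧸ R p n D) := by
  intro n
  induction n with
  | zero =>
    have htop : R p 0 D = ⊤ := by
      rw [eq_top_iff]
      intro x _
      exact ⟨x, by simp⟩
    rw [htop]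
    have := QuotientAddGroup.subsingleton_quotient_top (G := D)
    exact Finite.of_subsingleton
  | succ n ih =>
    have hQ1 : Finite (D ⧸ R p 1 D) := finQ1 p htors hDp
    have hle : R p (n+1) D ≤ (R p n D).comap (AddMonoidHom.id D) := by
      intro x hx; exact R_succ_le p n hx
    set f : D ⧸ R p (n+1) D →+ D ⧸ R p n D :=
      QuotientAddGroup.map _ _ (AddMonoidHom.id D) hle with hf
    have hcond : R p 1 D ≤
        ((QuotientAddGroup.mk' (R p (n+1) D)).comp (mu (p^n) D)).ker := by
      rintro x ⟨y, rfl⟩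
      show QuotientAddGroup.mk' (R p (n+1) D) (mu (p^n) D (mu (p^1) D y)) = 0
      rw [QuotientAddGroup.mk'_apply, QuotientAddGroup.eq_zero_iff]
      exact ⟨y, by simp [pow_succ, mul_smul, pow_one]⟩
    set g := QuotientAddGroup.lift (R p 1 D)
      ((QuotientAddGroup.mk' (R p (n+1) D)).comp (mu (p^n) D)) hcond with hg
    have hker : (f.ker : Set (D ⧸ R p (n+1) D)) ⊆ Set.range g := by
      intro q hq
      obtain ⟨x, rfl⟩ := QuotientAddGroup.mk'_surjective (R p (n+1) D) q
      have hq' : (QuotientAddGroup.mk x : D ⧸ R p n D) = 0 := hq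
      rw [QuotientAddGroup.eq_zero_iff] at hq'
      obtain ⟨y, hy⟩ := hq'
      refine ⟨QuotientAddGroup.mk y, ?_⟩
      rw [hg, QuotientAddGroup.lift_mk]
      show QuotientAddGroup.mk' (R p (n+1) D) (mu (p^n) D y) = _
      rw [QuotientAddGroup.mk'_apply]
      congr 1
    have hkfin : Finite f.ker := ((Set.finite_range g).subset hker).to_subtype
    exact finite_of_hom f ih hkfin


lemma pow_smul_add (p a b : ℕ) (x : D) : p ^ (a + b) • x = p ^ a • (p ^ b • x) := by
  rw [pow_add, mul_smul]

lemma exists_divisible_level (p : ℕ) (htors : ∀ x : D, ∃ n : ℕ, p ^ n • x = 0)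
    (hDp : {x : D | p • x = 0}.Finite) :
    ∃ N : ℕ, (∀ x ∈ R p N D, ∃ y ∈ R p N D, p • y = x) ∧
      ((R p N D : Set D) = ⋂ n : ℕ, {x : D | ∃ y : D, p ^ (n + 1) • y = x}) := by
  classical
  set Sset : ℕ → Set D := fun n => (R p n D : Set D) ∩ {x | p • x = 0} with hSset
  have hfin : ∀ n, (Sset n).Finite := fun n => hDp.subset Set.inter_subset_right
  have hmono : ∀ m n, m ≤ n → Sset n ⊆ Sset m := by
    intro m n h
    exact Set.inter_subset_inter_left _ (R_le_of_le p h)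
  set c : ℕ → ℕ := fun n => (Sset n).ncard with hc
  have hcmono : ∀ m n, m ≤ n → c n ≤ c m := fun m n h =>
    Set.ncard_le_ncard (hmono m n h) (hfin m)
  have hV : (Set.range c).Nonempty := ⟨c 0, ⟨0, rfl⟩⟩
  obtain ⟨N₀, hN₀⟩ := Nat.sInf_mem hV
  have hstab : ∀ n, N₀ ≤ n → Sset n = Sset N₀ := by
    intro n hn
    refine Set.eq_of_subset_of_ncard_le (hmono N₀ n hn) ?_ (hfin N₀)
    rw [show (Sset N₀).ncard = c N₀ from rfl, hN₀]
    exact Nat.sInf_le ⟨n, rfl⟩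
  set N := N₀ + 1 with hN
  have hdiv : ∀ k : ℕ, ∀ x ∈ R p N D, p ^ k • x = 0 → ∃ y ∈ R p N D, p • y = x := by
    intro k
    induction k with
    | zero =>
      intro x hx h0
      refine ⟨0, zero_mem _, ?_⟩
      rw [smul_zero]
      rw [pow_zero, one_smul] at h0
      exact h0.symm
    | succ k ih =>
      intro x hx hk1
      rw [mem_R] at hx
      obtain ⟨u, hu⟩ := hx
      have hz1 : (p ^ k • x) ∈ Sset (N + k) := by
        constructor
        · rw [SetLike.mem_coe, mem_R]
          exact ⟨u, by rw [Nat.add_comm N k, pow_smul_add, hu]⟩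
        · show p • p ^ k • x = 0
          rw [smul_smul, ← pow_succ']
          exact hk1
      have hz2 : (p ^ k • x) ∈ Sset (N + k + 1) := by
        rw [hstab (N+k+1) (by omega), ← hstab (N+k) (by omega)]
        exact hz1
      obtain ⟨hz2R, -⟩ := hz2
      rw [SetLike.mem_coe, mem_R] at hz2R
      obtain ⟨w, hw⟩ := hz2R
      set v := p ^ N • w with hv
      have hpv : p • v ∈ R p N D := by
        rw [mem_R]
        exact ⟨p • w, smul_comm _ _ _⟩
      have hx'R : x - p • v ∈ R p N D := by
        refine AddSubgroup.sub_mem _ ?_ hpv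
        rw [mem_R]; exact ⟨u, hu⟩
      have hx'k : p ^ k • (x - p • v) = 0 := by
        rw [smul_sub, hv, smul_smul, smul_smul,
          show p ^ k * p * p ^ N = p ^ (N + k + 1) by ring, hw, sub_self]
      obtain ⟨y', hy'R, hy'⟩ := ih (x - p • v) hx'R hx'k
      refine ⟨y' + v, ?_, ?_⟩
      · refine AddSubgroup.add_mem _ hy'R ?_
        rw [mem_R]; exact ⟨w, rfl⟩
      · rw [smul_add, hy']
        abel
  have hdiv' : ∀ x ∈ R p N D, ∃ y ∈ R p N D, p • y = x := by
    intro x hx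
    obtain ⟨k, hk⟩ := htors x
    exact hdiv k x hx hk
  refine ⟨N, hdiv', ?_⟩
  have hpow : ∀ m : ℕ, ∀ x ∈ R p N D, ∃ y ∈ R p N D, p ^ m • y = x := by
    intro m
    induction m with
    | zero => intro x hx; exact ⟨x, hx, by rw [pow_zero, one_smul]⟩
    | succ m ih =>
      intro x hx
      obtain ⟨y, hyR, hy⟩ := hdiv' x hx
      obtain ⟨z, hzR, hz⟩ := ih y hyR
      exact ⟨z, hzR, by rw [Nat.add_comm m 1, pow_smul_add, pow_one, hz, hy]⟩
  ext x
  constructor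
  · intro hx
    rw [Set.mem_iInter]
    intro n
    obtain ⟨y, -, hy⟩ := hpow (n+1) x hx
    exact ⟨y, hy⟩
  · intro hx
    rw [Set.mem_iInter] at hx
    obtain ⟨y, hy⟩ := hx N₀
    rw [SetLike.mem_coe, mem_R]
    exact ⟨y, hy⟩


lemma card_inf_T_pow (p : ℕ) (hDp : {x : D | p • x = 0}.Finite)
    (W : AddSubgroup D) (hW : ∀ x ∈ W, ∃ y ∈ W, p • y = x) :
    ∀ n, Nat.card ↥(W ⊓ T p n D) = Nat.card ↥(W ⊓ T p 1 D) ^ n := by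
  have hT := T_finite p hDp
  have hfinWT : ∀ m, Finite ↥(W ⊓ T p m D) := by
    intro m
    have : ((W ⊓ T p m D : AddSubgroup D) : Set D) ⊆ (T p m D : Set D) := by
      intro x hx; exact hx.2
    exact ((hT m).subset this).to_subtype
  intro n
  induction n with
  | zero =>
    have hbot : W ⊓ T p 0 D = ⊥ := by
      rw [eq_bot_iff]
      rintro x ⟨-, hx⟩
      have hx' : p ^ 0 • x = 0 := hx
      simpa using hx'
    rw [hbot, pow_zero]
    simp
  | succ n ih =>
    have hmaps : ∀ a : ↥(W ⊓ T p (n+1) D), p • (a : D) ∈ W ⊓ T p n D := by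
      rintro ⟨a, haW, haT⟩
      refine ⟨nsmul_mem haW p, ?_⟩
      show p ^ n • (p • a) = 0
      rw [smul_smul, ← pow_succ]
      exact haT
    set μ : ↥(W ⊓ T p (n+1) D) →+ ↥(W ⊓ T p n D) :=
      AddMonoidHom.mk' (fun a => ⟨p • (a : D), hmaps a⟩)
        (fun a b => Subtype.ext (smul_add p (a : D) (b : D))) with hμ
    have hfin1 := hfinWT (n+1)
    have hsurj : Function.Surjective μ := by
      rintro ⟨b, hbW, hbT⟩
      obtain ⟨y, hyW, hy⟩ := hW b hbW
      refine ⟨⟨y, hyW, ?_⟩, ?_⟩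
      · show p ^ (n+1) • y = 0
        rw [pow_succ, mul_smul, hy]
        exact hbT
      · exact Subtype.ext hy
    have hrange : Nat.card ↥μ.range = Nat.card ↥(W ⊓ T p n D) := by
      rw [AddMonoidHom.range_eq_top_of_surjective μ hsurj]
      exact Nat.card_congr AddSubgroup.topEquiv.toEquiv
    have hker : Nat.card ↥μ.ker = Nat.card ↥(W ⊓ T p 1 D) := by
      refine Nat.card_congr ⟨fun a => ⟨(a.1 : D), a.1.2.1, ?_⟩,
        fun b => ⟨⟨(b : D), b.2.1, ?_⟩, ?_⟩, fun a => Subtype.ext (Subtype.ext rfl),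
        fun b => Subtype.ext rfl⟩
      · show p ^ 1 • ((a.1 : D)) = 0
        rw [pow_one]
        exact congrArg Subtype.val a.2
      · show p ^ (n+1) • (b : D) = 0
        have hb1 : p • (b : D) = 0 := by
          have h : p ^ 1 • (b : D) = 0 := b.2.2
          rwa [pow_one] at h
        rw [pow_succ, mul_smul, hb1, smul_zero]
      · exact Subtype.ext (by
          show p • (b : D) = 0
          have h : p ^ 1 • (b : D) = 0 := b.2.2
          rwa [pow_one] at h)
    calc Nat.card ↥(W ⊓ T p (n+1) D) = Nat.card ↥μ.ker * Nat.card ↥μ.range :=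
          card_ker_mul_card_range μ
      _ = Nat.card ↥(W ⊓ T p 1 D) * Nat.card ↥(W ⊓ T p 1 D) ^ n := by
          rw [hker, hrange, ih]
      _ = Nat.card ↥(W ⊓ T p 1 D) ^ (n + 1) := by rw [pow_succ, mul_comm]


lemma arith_aux (t : ℕ) (ht : 0 < t) : ∀ n : ℕ, t ^ n * (t + n) ≤ t * (t + 1) ^ n := by
  intro n
  induction n with
  | zero => simp
  | succ n ih =>
    calc t ^ (n+1) * (t + (n+1)) = t * (t ^ n * (t + n)) + t ^ n * t := by ring
      _ ≤ t * (t * (t+1)^n) + t ^ n * (t + n) * 1 := by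
          have h1 : t ^ n * t ≤ t ^ n * (t + n) * 1 := by
            rw [mul_one]
            exact Nat.mul_le_mul_left _ (Nat.le_add_right _ _)
          exact Nat.add_le_add (Nat.mul_le_mul_left _ ih) h1
      _ ≤ t * (t * (t+1)^n) + t * (t+1)^n := by
          have := Nat.mul_le_mul ih (le_refl 1)
          simpa using Nat.add_le_add_left (by simpa using ih) (t * (t * (t+1)^n))
      _ = t * (t+1) ^ (n+1) := by ring

lemma surj_on_div (p : ℕ) (htors : ∀ x : D, ∃ n : ℕ, p ^ n • x = 0)
    (hDp : {x : D | p • x = 0}.Finite)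
    (E : AddSubgroup D) (hdivE : ∀ x ∈ E, ∃ y ∈ E, p • y = x)
    (φ : D →+ D) (hφE : ∀ x ∈ E, φ x ∈ E)
    (hker : {x : D | φ x = 0}.Finite) :
    ∀ x ∈ E, ∃ y ∈ E, φ y = x := by
  classical
  have hT := T_finite p hDp
  set H := AddSubgroup.map φ E with hH
  have hHle : H ≤ E := by
    rintro _ ⟨x, hx, rfl⟩
    exact hφE x hx
  have hdivH : ∀ x ∈ H, ∃ y ∈ H, p • y = x := by
    rintro _ ⟨e, he, rfl⟩
    obtain ⟨e', he', h⟩ := hdivE e he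
    exact ⟨φ e', ⟨e', he', rfl⟩, by rw [← map_nsmul, h]⟩
  have hfinT : ∀ (W : AddSubgroup D) (m : ℕ), Finite ↥(W ⊓ T p m D) := by
    intro W m
    have hsub : ((W ⊓ T p m D : AddSubgroup D) : Set D) ⊆ (T p m D : Set D) := by
      intro x hx; exact hx.2
    exact ((hT m).subset hsub).to_subtype
  have cardH := card_inf_T_pow p hDp H hdivH
  have cardE := card_inf_T_pow p hDp E hdivE
  set s := Nat.card ↥(E ⊓ T p 1 D) with hs
  set t := Nat.card ↥(H ⊓ T p 1 D) with ht
  have hkerfin : Finite ↥φ.ker := hker.to_subtype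
  set k := Nat.card ↥φ.ker with hk
  have hbound : ∀ n, s ^ n ≤ k * t ^ n := by
    intro n
    have hmapsν : ∀ a : ↥(E ⊓ T p n D), φ (a : D) ∈ H ⊓ T p n D := by
      rintro ⟨a, haE, haT⟩
      refine ⟨⟨a, haE, rfl⟩, ?_⟩
      show p ^ n • φ a = 0
      rw [← map_nsmul]
      rw [show p ^ n • a = 0 from haT, map_zero]
    set ν : ↥(E ⊓ T p n D) →+ ↥(H ⊓ T p n D) :=
      AddMonoidHom.mk' (fun a => ⟨φ (a : D), hmapsν a⟩)
        (fun a b => Subtype.ext (map_add φ (a : D) (b : D))) with hν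
    have hfinE := hfinT E n
    have hfinH := hfinT H n
    have hc := card_ker_mul_card_range ν
    have hkle : Nat.card ↥ν.ker ≤ k := by
      rw [hk]
      refine Nat.card_le_card_of_injective
        (fun a => (⟨((a : ↥(E ⊓ T p n D)) : D), ?_⟩ : ↥φ.ker)) ?_
      · show φ _ = 0
        exact congrArg Subtype.val a.2
      · intro a b hab
        exact Subtype.ext (Subtype.ext (Subtype.mk_eq_mk.mp hab))
    have hrle : Nat.card ↥ν.range ≤ t ^ n := by
      rw [← cardH n]
      exact Nat.card_le_card_of_injective
        (fun a => ((a : ↥(H ⊓ T p n D))))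
        (fun a b hab => Subtype.ext hab)
    calc s ^ n = Nat.card ↥(E ⊓ T p n D) := (cardE n).symm
      _ = Nat.card ↥ν.ker * Nat.card ↥ν.range := hc
      _ ≤ k * t ^ n := Nat.mul_le_mul hkle hrle
  have htpos : 0 < t := Nat.card_pos
  have hkpos : 0 < k := Nat.card_pos
  have hts : t ≤ s := by
    rw [hs, ht]
    exact Nat.card_le_card_of_injective
      (AddSubgroup.inclusion (inf_le_inf_right _ hHle))
      (AddSubgroup.inclusion_injective _)
  have hst : s ≤ t := by
    by_contra hlt
    push_neg at hlt
    set n := t * k with hn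
    have h1 : s ^ n ≤ k * t ^ n := hbound n
    have h2 : (t + 1) ^ n ≤ s ^ n := Nat.pow_le_pow_left hlt n
    have h3 := arith_aux t htpos n
    have h4 : t ^ n * (t + n) ≤ t * (k * t ^ n) :=
      le_trans h3 (le_trans (Nat.mul_le_mul_left _ h2) (Nat.mul_le_mul_left _ h1))
    have h5 : t ^ n * (t + t * k) ≤ t ^ n * (t * k) := by
      calc t ^ n * (t + t * k) = t ^ n * (t + n) := by rw [hn]
        _ ≤ t * (k * t ^ n) := h4
        _ = t ^ n * (t * k) := by ring
    have h6 : t + t * k ≤ t * k :=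
      Nat.le_of_mul_le_mul_left h5 (pow_pos htpos n)
    omega
  have hteqs : t = s := le_antisymm hts hst
  have hsocle : ((H ⊓ T p 1 D : AddSubgroup D) : Set D) = ((E ⊓ T p 1 D : AddSubgroup D) : Set D) := by
    refine Set.eq_of_subset_of_ncard_le ?_ ?_ ?_
    · exact SetLike.coe_subset_coe.mpr (inf_le_inf_right _ hHle)
    · rw [← Nat.card_coe_set_eq, ← Nat.card_coe_set_eq]
      have e1 : Nat.card ↥((E ⊓ T p 1 D : AddSubgroup D) : Set D) = s := rfl
      have e2 : Nat.card ↥((H ⊓ T p 1 D : AddSubgroup D) : Set D) = t := rfl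
      rw [e1, e2, hteqs]
    · exact (hT 1).subset (fun x hx => hx.2)
  have hfull : ∀ m : ℕ, ∀ x ∈ E, p ^ m • x = 0 → x ∈ H := by
    intro m
    induction m with
    | zero =>
      intro x hx h0
      rw [pow_zero, one_smul] at h0
      rw [h0]
      exact zero_mem _
    | succ m ih =>
      intro x hx hm1
      have hpx : p • x ∈ E := nsmul_mem hx p
      have hpxT : p ^ m • (p • x) = 0 := by
        rw [smul_smul, ← pow_succ]
        exact hm1
      have hpxH : p • x ∈ H := ih (p • x) hpx hpxT
      obtain ⟨h, hhH, hh⟩ := hdivH (p • x) hpxH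
      have hxh : x - h ∈ E ⊓ T p 1 D := by
        refine AddSubgroup.mem_inf.mpr ⟨sub_mem hx (hHle hhH), ?_⟩
        show p ^ 1 • (x - h) = 0
        rw [pow_one, smul_sub, hh, sub_self]
      have hxhH : x - h ∈ H ⊓ T p 1 D := by
        have : (x - h) ∈ ((H ⊓ T p 1 D : AddSubgroup D) : Set D) := by
          rw [hsocle]; exact hxh
        exact this
      have : x = (x - h) + h := by abel
      rw [this]
      exact add_mem hxhH.1 hhH
  intro x hx
  obtain ⟨m, hm⟩ := htors x
  obtain ⟨y, hy, rfl⟩ := hfull m x hx hm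
  exact ⟨y, hy, rfl⟩

end Stmt6Aux


open Stmt6Aux in
/-- let `D` be a torsion abelian `p`-group with finite `p`-torsion subgroup,
`ψ` an automorphism of `D` with finite fixed-point subgroup `D^ψ`, and
`D_div = ⋂_{n≥1} pⁿ·D` the maximal divisible subgroup.  Then `D/(ψ−1)D` is finite of
cardinality `|D^ψ| / |D^ψ ∩ D_div|` (stated multiplicatively). -/
theorem stmt6 (p : ℕ) [Fact p.Prime] (D : Type*) [AddCommGroup D]
    (htors : ∀ x : D, ∃ n : ℕ, p ^ n • x = 0)
    (hDp : {x : D | p • x = 0}.Finite)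
    (ψ : D ≃+ D)
    (Fψ : AddSubgroup D) (hFψ : (Fψ : Set D) = {x | ψ x = x})
    (hfix : (Fψ : Set D).Finite)
    (Ddiv : AddSubgroup D)
    (hdiv : (Ddiv : Set D) = ⋂ n : ℕ, {x | ∃ y : D, p ^ (n + 1) • y = x})
    (S : AddSubgroup D) (hS : (S : Set D) = Set.range fun x : D => ψ x - x) :
    Finite (D ⧸ S) ∧
      Nat.card (D ⧸ S) * Nat.card ↥(Fψ ⊓ Ddiv) = Nat.card ↥Fψ := by
  classical
  set φ : D →+ D := ψ.toAddMonoidHom - AddMonoidHom.id D with hφ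
  have hφapp : ∀ x : D, φ x = ψ x - x := fun x => rfl
  have hSrange : S = φ.range := by
    apply SetLike.ext'
    rw [hS]
    ext x
    constructor
    · rintro ⟨y, rfl⟩; exact ⟨y, (hφapp y).symm ▸ rfl⟩
    · rintro ⟨y, rfl⟩; exact ⟨y, (hφapp y).symm⟩
  have hKkergrp : Fψ = φ.ker := by
    apply SetLike.ext'
    rw [hFψ]
    ext x
    simp only [Set.mem_setOf_eq, SetLike.mem_coe, AddMonoidHom.mem_ker, hφapp,
      sub_eq_zero]
  obtain ⟨N, hdivN, hsetN⟩ := exists_divisible_level p htors hDp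
  have hDdiv : Ddiv = R p N D := SetLike.ext' (by rw [hdiv, ← hsetN])
  have hψdiv : ∀ x ∈ Ddiv, ψ x ∈ Ddiv := by
    intro x hx
    have hx' : x ∈ (Ddiv : Set D) := hx
    have hgoal : ψ x ∈ (Ddiv : Set D) := by
      rw [hdiv, Set.mem_iInter]
      rw [hdiv, Set.mem_iInter] at hx'
      intro n
      obtain ⟨y, hy⟩ := hx' n
      exact ⟨ψ y, by rw [← map_nsmul, hy]⟩
    exact hgoal
  have hφdiv : ∀ x ∈ Ddiv, φ x ∈ Ddiv := by
    intro x hx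
    rw [hφapp]
    exact sub_mem (hψdiv x hx) hx
  have hkerfin : {x : D | φ x = 0}.Finite := by
    refine hfix.subset ?_
    intro x hx
    rw [hFψ]
    have : ψ x - x = 0 := by rw [← hφapp]; exact hx
    exact sub_eq_zero.mp this
  have hdivE : ∀ x ∈ Ddiv, ∃ y ∈ Ddiv, p • y = x := by
    rw [hDdiv]; exact hdivN
  have hsurjE : ∀ x ∈ Ddiv, ∃ y ∈ Ddiv, φ y = x :=
    surj_on_div p htors hDp Ddiv hdivE φ hφdiv hkerfin
  have hQfin : Finite (D ⧸ Ddiv) := by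
    rw [hDdiv]; exact finQn p htors hDp N
  have hcomap : Ddiv ≤ Ddiv.comap φ := fun x hx => hφdiv x hx
  set φbar : (D ⧸ Ddiv) →+ (D ⧸ Ddiv) := QuotientAddGroup.map Ddiv Ddiv φ hcomap
    with hφbar
  set π := QuotientAddGroup.mk' Ddiv with hπ
  have hES : Ddiv ≤ S := by
    intro x hx
    obtain ⟨y, hy, hyx⟩ := hsurjE x hx
    rw [hSrange]
    exact ⟨y, hyx⟩
  set θ : D →+ (D ⧸ Ddiv) ⧸ φbar.range := (QuotientAddGroup.mk' φbar.range).comp π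
    with hθ
  have hθsurj : Function.Surjective θ :=
    (QuotientAddGroup.mk'_surjective _).comp (QuotientAddGroup.mk'_surjective _)
  have hφbar_mk : ∀ x : D, φbar (π x) = π (φ x) := by
    intro x
    rw [hφbar]
    exact QuotientAddGroup.map_mk' Ddiv Ddiv φ hcomap x
  have hθker : θ.ker = S := by
    ext x
    constructor
    · intro hx
      have hx' : (QuotientAddGroup.mk' φbar.range) (π x) = 0 := hx
      rw [QuotientAddGroup.mk'_apply, QuotientAddGroup.eq_zero_iff] at hx'
      obtain ⟨q, hq⟩ := hx'
      obtain ⟨y, rfl⟩ := QuotientAddGroup.mk'_surjective Ddiv q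
      have heq : π (φ y) = π x := by rw [← hφbar_mk]; exact hq
      have hmem : φ y - x ∈ Ddiv := by
        rw [QuotientAddGroup.mk'_apply, QuotientAddGroup.mk'_apply] at heq
        exact (QuotientAddGroup.eq_iff_sub_mem).mp heq
      have hx2 : x = φ y - (φ y - x) := by abel
      rw [hx2]
      refine sub_mem ?_ (hES hmem)
      rw [hSrange]
      exact ⟨y, rfl⟩
    · intro hx
      rw [hSrange] at hx
      obtain ⟨y, rfl⟩ := hx
      show (QuotientAddGroup.mk' φbar.range) (π (φ y)) = 0
      rw [QuotientAddGroup.mk'_apply, QuotientAddGroup.eq_zero_iff]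
      exact ⟨π y, hφbar_mk y⟩
  have e1 : D ⧸ S ≃+ (D ⧸ Ddiv) ⧸ φbar.range :=
    (QuotientAddGroup.quotientAddEquivOfEq hθker.symm).trans
      (QuotientAddGroup.quotientKerEquivOfSurjective θ hθsurj)
  have hQQfin : Finite ((D ⧸ Ddiv) ⧸ φbar.range) := Quotient.finite _
  have hfinDS : Finite (D ⧸ S) := Finite.of_equiv _ e1.symm.toEquiv
  refine ⟨hfinDS, ?_⟩
  have hc1 : Nat.card (D ⧸ S) = Nat.card ((D ⧸ Ddiv) ⧸ φbar.range) :=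
    Nat.card_congr e1.toEquiv
  have hc2 : Nat.card (D ⧸ Ddiv)
      = Nat.card ((D ⧸ Ddiv) ⧸ φbar.range) * Nat.card ↥φbar.range :=
    AddSubgroup.card_eq_card_quotient_mul_card_addSubgroup _
  have hc3 : Nat.card (D ⧸ Ddiv) = Nat.card ↥φbar.ker * Nat.card ↥φbar.range :=
    card_ker_mul_card_range φbar
  have hrpos : 0 < Nat.card ↥φbar.range := Nat.card_pos
  have hc4 : Nat.card (D ⧸ S) = Nat.card ↥φbar.ker := by
    have h := hc2.symm.trans hc3
    have h' : Nat.card ((D ⧸ Ddiv) ⧸ φbar.range) = Nat.card ↥φbar.ker :=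
      Nat.eq_of_mul_eq_mul_right hrpos h
    rw [hc1, h']
  set ρ : ↥Fψ →+ (D ⧸ Ddiv) := π.comp Fψ.subtype with hρ
  have hFfin : Finite ↥Fψ := hfix.to_subtype
  have hc5 : Nat.card ↥Fψ = Nat.card ↥ρ.ker * Nat.card ↥ρ.range :=
    card_ker_mul_card_range ρ
  have hrange : ρ.range = φbar.ker := by
    ext q
    constructor
    · rintro ⟨a, rfl⟩
      show φbar (π (a : D)) = 0
      rw [hφbar_mk]
      have ha : φ (a : D) = 0 := by
        have h : (a : D) ∈ φ.ker := by rw [← hKkergrp]; exact a.2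
        exact h
      rw [ha, map_zero]
    · intro hq
      obtain ⟨x, rfl⟩ := QuotientAddGroup.mk'_surjective Ddiv q
      have h0 : π (φ x) = 0 := by
        rw [← hφbar_mk]
        exact hq
      rw [QuotientAddGroup.mk'_apply, QuotientAddGroup.eq_zero_iff] at h0
      obtain ⟨e, he, hfe⟩ := hsurjE (φ x) h0
      have hxe : x - e ∈ Fψ := by
        rw [hKkergrp]
        show φ (x - e) = 0
        rw [map_sub, hfe, sub_self]
      refine ⟨⟨x - e, hxe⟩, ?_⟩
      show π (x - e) = π x
      have hpe : π e = 0 := by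
        rw [QuotientAddGroup.mk'_apply, QuotientAddGroup.eq_zero_iff]
        exact he
      rw [map_sub, hpe, sub_zero]
  have hkerρ : Nat.card ↥ρ.ker = Nat.card ↥(Fψ ⊓ Ddiv) := by
    refine Nat.card_congr ⟨fun a => ⟨(a.1 : D), AddSubgroup.mem_inf.mpr ⟨a.1.2, ?_⟩⟩,
      fun b => ⟨⟨(b : D), (AddSubgroup.mem_inf.mp b.2).1⟩, ?_⟩,
      fun a => Subtype.ext (Subtype.ext rfl), fun b => Subtype.ext rfl⟩
    · have h := a.2
      have h' : π ((a.1 : D)) = 0 := h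
      rw [QuotientAddGroup.mk'_apply, QuotientAddGroup.eq_zero_iff] at h'
      exact h'
    · show π ((b : D)) = 0
      rw [QuotientAddGroup.mk'_apply, QuotientAddGroup.eq_zero_iff]
      exact (AddSubgroup.mem_inf.mp b.2).2
  have hcr : Nat.card ↥ρ.range = Nat.card ↥φbar.ker := by rw [hrange]
  rw [hc4, hc5, hcr, ← hkerρ]
  ring
end

section
/- Let p be a prime and D a p-divisible torsion abelian p-group whose p-torsion subgroup D[p] is finite. Let c be an automorphism of D, and for m ≥ 0 set D_m = {x ∈ D : c^{p^m}(x) = x}. Assume that D = ⋃_{m≥0} D_m and that each D_m is finite. Then there exists m₀ such that for all m ≥ m₀ one has D_{m−1} = p·D_m, i.e., D_{m−1} equals the image of D_m under multiplication by p. -/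
private instance stmt8.instMonoidAddAut {D : Type*} [AddCommGroup D] : Monoid (AddAut D) where
  mul g h := h.trans g
  one := AddEquiv.refl D
  mul_assoc _ _ _ := rfl
  one_mul _ := rfl
  mul_one _ := rfl

private lemma stmt8.mul_apply {D : Type*} [AddCommGroup D] (g h : AddAut D) (z : D) :
    (g * h) z = g (h z) := rfl

@[simp] private lemma stmt8.one_apply {D : Type*} [AddCommGroup D] (z : D) :
    (1 : AddAut D) z = z := rfl

private lemma stmt8.nsmul_eq_pow {D : Type*} [AddCommGroup D] (c : AddAut D) (n : ℕ) :
    n • c = c ^ n := by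
  induction n with
  | zero => rfl
  | succ n ih => rw [succ_nsmul, pow_succ, ← ih]; rfl

private lemma stmt8.pow_apply_comm {D : Type*} [AddCommGroup D] (g : AddAut D) (j : ℕ) (z : D) :
    (g ^ j) (g z) = g ((g ^ j) z) := by
  rw [← stmt8.mul_apply, ← pow_succ, pow_succ', stmt8.mul_apply]

private lemma stmt8.pow_pow_apply {D : Type*} [AddCommGroup D] (g : AddAut D) (k j : ℕ) (z : D) :
    (g ^ k) ((g ^ j) z) = (g ^ j) ((g ^ k) z) := by
  rw [← stmt8.mul_apply, ← stmt8.mul_apply, ← pow_add, ← pow_add, Nat.add_comm]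

private def stmt8.eD {D : Type*} [AddCommGroup D] (g : AddAut D) (z : D) : D := g z - z

private def stmt8.hD {D : Type*} [AddCommGroup D] (p : ℕ) (g : AddAut D) (z : D) : D :=
  ∑ i ∈ Finset.range p, ∑ j ∈ Finset.range i, (g ^ j) z

namespace stmt8
variable {D : Type*} [AddCommGroup D] (p : ℕ) (g : AddAut D)

private lemma eD_add (u v : D) : eD g (u + v) = eD g u + eD g v := by
  simp only [eD, map_add]; abel

private lemma eD_sub (u v : D) : eD g (u - v) = eD g u - eD g v := by
  simp only [eD, map_sub]; abel

private lemma eD_nsmul (n : ℕ) (u : D) : eD g (n • u) = n • eD g u := by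
  simp only [eD, map_nsmul, smul_sub]

private lemma eD_g (u : D) : eD g (g u) = g (eD g u) := by
  simp only [eD, map_sub]

private lemma eD_pow (k : ℕ) (u : D) : eD g ((g ^ k) u) = (g ^ k) (eD g u) := by
  simp only [eD, map_sub, pow_apply_comm]

private lemma eD_sum_range (n : ℕ) (z : D) :
    eD g (∑ j ∈ Finset.range n, (g ^ j) z) = (g ^ n) z - z := by
  have h1 : eD g (∑ j ∈ Finset.range n, (g ^ j) z)
      = ∑ j ∈ Finset.range n, ((g ^ (j + 1)) z - (g ^ j) z) := by
    simp only [eD, map_sum, ← Finset.sum_sub_distrib]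
    refine Finset.sum_congr rfl fun j _ => ?_
    rw [pow_succ', stmt8.mul_apply]
  rw [h1, Finset.sum_range_sub (f := fun j => (g ^ j) z)]
  simp

private lemma hD_nsmul (n : ℕ) (z : D) : hD p g (n • z) = n • hD p g z := by
  simp only [hD, map_nsmul, Finset.smul_sum]

private lemma hD_pow (k : ℕ) (z : D) : hD p g ((g ^ k) z) = (g ^ k) (hD p g z) := by
  simp only [hD, map_sum, pow_pow_apply]

private lemma hD_eD (z : D) : hD p g (eD g z) = eD g (hD p g z) := by
  have h1 : hD p g (g z - z) = hD p g (g z) - hD p g z := by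
    simp only [hD, map_sub, Finset.sum_sub_distrib]
  have h2 : hD p g (g z) = g (hD p g z) := by
    have := hD_pow p g 1 z
    simpa using this
  simp only [eD, h1, h2]

private lemma N_eq (y : D) :
    ∑ i ∈ Finset.range p, (g ^ i) y = p • y + eD g (hD p g y) := by
  have h1 : eD g (hD p g y) = ∑ i ∈ Finset.range p, ((g ^ i) y - y) := by
    have h2 : eD g (hD p g y)
        = ∑ i ∈ Finset.range p, eD g (∑ j ∈ Finset.range i, (g ^ j) y) := by
      simp only [eD, hD, map_sum, Finset.sum_sub_distrib]
    rw [h2]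
    exact Finset.sum_congr rfl fun i _ => eD_sum_range g i y
  rw [h1, Finset.sum_sub_distrib, Finset.sum_const, Finset.card_range]
  abel

private lemma N_fix (y : D) (hy : (g ^ p) y = y) :
    eD g (∑ i ∈ Finset.range p, (g ^ i) y) = 0 := by
  rw [eD_sum_range, hy, sub_self]

/-- The core of the hard direction. -/
private lemma hard {D : Type*} [AddCommGroup D] (p : ℕ) (g : AddAut D) (s : D → D)
    (hs : ∀ x : D, p • s x = x)
    (hgfix : ∀ x : D, p ^ 2 • x = 0 → g x = x)
    (n : ℕ) (hbd : ∀ z : D, (g ^ p) z = z → p ^ n • z = 0)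
    (y : D) (hy : (g ^ p) y = y) : g (p • y) = p • y := by
  -- well-definedness of division by p²
  have hwd : ∀ u u' : D, p ^ 2 • u = p ^ 2 • u' → eD g u = eD g u' := by
    intro u u' h
    have h0 : p ^ 2 • (u - u') = 0 := by rw [smul_sub, h, sub_self]
    have h1 : eD g (u - u') = 0 := by
      rw [eD]
      rw [hgfix _ h0, sub_self]
    have h2 := eD_sub g u u'
    rw [h1] at h2
    exact sub_eq_zero.mp h2.symm
  -- p²-division map σ
  set σ : D → D := fun z => eD g (s (s z)) with hσdef
  have hss : ∀ z : D, p ^ 2 • s (s z) = z := by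
    intro z
    rw [pow_two, mul_smul, hs, hs]
  have hσ_eq : ∀ u w : D, p ^ 2 • w = u → σ u = eD g w := by
    intro u w h
    exact hwd _ _ (by rw [hss u, h])
  have hσ_p2 : ∀ z : D, p ^ 2 • σ z = eD g z := by
    intro z
    rw [hσdef]
    simp only
    rw [← eD_nsmul, hss]
  have hσ_smul : ∀ z : D, σ (p • z) = p • σ z := by
    intro z
    have h1 : σ (p • z) = eD g (p • s (s z)) :=
      hσ_eq _ _ (by rw [smul_comm, hss])
    rw [h1, eD_nsmul]
  have hσ_g : ∀ z : D, σ (g z) = g (σ z) := by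
    intro z
    have h1 : σ (g z) = eD g (g (s (s z))) :=
      hσ_eq _ _ (by rw [← map_nsmul, hss])
    rw [h1, eD_g]
  have hσ_pow : ∀ (k : ℕ) (z : D), σ ((g ^ k) z) = (g ^ k) (σ z) := by
    intro k
    induction k with
    | zero => simp
    | succ k ih =>
      intro z
      rw [pow_succ', stmt8.mul_apply, stmt8.mul_apply, hσ_g, ih]
  -- the element v = ε(p•y) and its key self-reproducing property
  set v : D := eD g (p • y) with hvdef
  have hvfix : (g ^ p) v = v := by
    rw [hvdef, ← eD_pow, map_nsmul, hy]
  have hv : v = -(p • σ (hD p g v)) := by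
    have h0 : eD g (p • y) + eD g (eD g (hD p g y)) = 0 := by
      have h1 := N_fix p g y hy
      rw [N_eq p g y, eD_add] at h1
      exact h1
    have h2 : eD g (eD g (hD p g y)) = p • σ (hD p g v) := by
      have h3 : hD p g v = p • eD g (hD p g y) := by
        rw [hvdef, ← eD_nsmul, ← hD_nsmul, hD_eD]
      rw [h3, hσ_smul, ← mul_smul, ← pow_two, hσ_p2]
    rw [h2, ← hvdef] at h0
    exact eq_neg_of_add_eq_zero_left h0
  -- iterate : v is divisible by p^k inside the fixed set of g^p
  have hstep : ∀ u : D, (g ^ p) u = u → u = -(p • σ (hD p g u)) →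
      ∃ u' : D, ((g ^ p) u' = u' ∧ u' = -(p • σ (hD p g u'))) ∧ u = p • u' := by
    intro u hu1 hu2
    refine ⟨-(σ (hD p g u)), ⟨?_, ?_⟩, ?_⟩
    · rw [map_neg, ← hσ_pow, ← hD_pow, hu1]
    · have h4 : u = p • (-(σ (hD p g u))) := by rw [smul_neg, ← hu2]
      have h5 : σ (hD p g u) = p • σ (hD p g (-(σ (hD p g u)))) := by
        conv_lhs => rw [h4]
        rw [hD_nsmul, hσ_smul]
      exact congrArg Neg.neg h5
    · rw [smul_neg, ← hu2]
  have hind : ∀ k : ℕ, ∃ u : D, ((g ^ p) u = u ∧ u = -(p • σ (hD p g u)))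
      ∧ v = p ^ k • u := by
    intro k
    induction k with
    | zero => exact ⟨v, ⟨hvfix, hv⟩, by simp⟩
    | succ k ih =>
      obtain ⟨u, ⟨hu1, hu2⟩, hu3⟩ := ih
      obtain ⟨u', hu', huu'⟩ := hstep u hu1 hu2
      exact ⟨u', hu', by rw [hu3, huu', ← mul_smul, ← pow_succ]⟩
  -- conclude v = 0
  obtain ⟨u, ⟨hu1, _⟩, hu3⟩ := hind n
  have hv0 : v = 0 := by rw [hu3, hbd u hu1]
  have : g (p • y) - p • y = 0 := hv0
  exact sub_eq_zero.mp this
end stmt8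


private lemma stmt8.fix_pow {D : Type*} [AddCommGroup D] (a : AddAut D) (x : D)
    (h : a x = x) (n : ℕ) : (a ^ n) x = x := by
  induction n with
  | zero => simp
  | succ n ih => rw [pow_succ, stmt8.mul_apply, h, ih]

/-- let `D` be a `p`-divisible torsion abelian `p`-group with `D[p]` finite,
`c` an automorphism of `D` with `D = ⋃_m D_m` where `D_m = {x : c^(p^m) x = x}` is finite
for each `m`.  Then `D_{m−1} = p·D_m` for all sufficiently large `m`. -/
theorem stmt8 (p : ℕ) [Fact p.Prime] (D : Type*) [AddCommGroup D]
    (htors : ∀ x : D, ∃ n : ℕ, p ^ n • x = 0)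
    (hDp : {x : D | p • x = 0}.Finite)
    (hdiv : ∀ x : D, ∃ y : D, p • y = x)
    (c : AddAut D)
    (hunion : ∀ x : D, ∃ m : ℕ, ((p ^ m) • c) x = x)
    (hfin : ∀ m : ℕ, {x : D | ((p ^ m) • c) x = x}.Finite) :
    ∃ m₀ : ℕ, ∀ m ≥ m₀,
      {x : D | ((p ^ (m - 1)) • c) x = x}
        = (fun x : D => p • x) '' {x : D | ((p ^ m) • c) x = x} := by
  simp only [stmt8.nsmul_eq_pow] at hunion hfin ⊢
  classical
  choose s hs using hdiv
  choose e he using hunion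
  choose t ht using htors
  -- monotonicity of the fixed sets
  have hmono : ∀ (x : D) (k l : ℕ), k ≤ l → (c ^ p ^ k) x = x → (c ^ p ^ l) x = x := by
    intro x k l hkl hx
    have h1 : p ^ k * p ^ (l - k) = p ^ l := by
      rw [← pow_add]; congr 1; omega
    rw [← h1, pow_mul]
    exact stmt8.fix_pow _ _ hx _
  -- D[p²] is finite
  have hS2 : {x : D | p ^ 2 • x = 0}.Finite := by
    have hsub : {x : D | p ^ 2 • x = 0} ⊆
        (fun q : D × D => s q.1 + q.2) '' ({x : D | p • x = 0} ×ˢ {x : D | p • x = 0}) := by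
      intro x hx
      refine ⟨(p • x, x - s (p • x)), ⟨?_, ?_⟩, ?_⟩
      · show p • (p • x) = 0
        rw [← mul_smul, ← pow_two]; exact hx
      · show p • (x - s (p • x)) = 0
        rw [smul_sub, hs (p • x), sub_self]
      · show s (p • x) + (x - s (p • x)) = x
        abel
    exact ((hDp.prod hDp).image _).subset hsub
  -- m₁ : D[p²] is fixed by c^(p^m₁)
  set m₁ : ℕ := hS2.toFinset.sup e with hm₁def
  have hm₁ : ∀ x : D, p ^ 2 • x = 0 → (c ^ p ^ m₁) x = x := by
    intro x hx
    exact hmono x (e x) m₁ (Finset.le_sup (hS2.mem_toFinset.mpr hx)) (he x)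
  refine ⟨m₁ + 2, fun m hm => ?_⟩
  set g : AddAut D := c ^ p ^ (m - 1) with hgdef
  have hgp : c ^ p ^ m = g ^ p := by
    rw [hgdef, ← pow_mul, ← pow_succ]
    congr 2
    omega
  have hgfix : ∀ x : D, p ^ 2 • x = 0 → g x = x := fun x hx =>
    hmono x m₁ (m - 1) (by omega) (hm₁ x hx)
  ext x
  simp only [Set.mem_setOf_eq, Set.mem_image]
  constructor
  · -- easy direction : D_{m-1} ⊆ p • D_m
    intro hx
    refine ⟨s x, ?_, hs x⟩
    have hw : p • (g (s x) - s x) = 0 := by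
      rw [smul_sub, ← map_nsmul, hs x, hx, sub_self]
    have hgw : g (g (s x) - s x) = g (s x) - s x :=
      hgfix _ (by rw [pow_two, mul_smul, hw, smul_zero])
    have key : ∀ k : ℕ, (g ^ k) (s x) = s x + k • (g (s x) - s x) := by
      intro k
      induction k with
      | zero => simp
      | succ k ih =>
        rw [pow_succ', stmt8.mul_apply, ih, map_add, map_nsmul, hgw, succ_nsmul]
        abel
    rw [hgp, key p, hw, add_zero]
  · -- hard direction : p • D_m ⊆ D_{m-1}
    rintro ⟨y, hy, rfl⟩
    rw [hgp] at hy
    have hbd : ∃ n : ℕ, ∀ z : D, (g ^ p) z = z → p ^ n • z = 0 := by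
      refine ⟨(hfin m).toFinset.sup t, ?_⟩
      intro z hz
      have hzm : (c ^ p ^ m) z = z := by rw [hgp]; exact hz
      have hle : t z ≤ (hfin m).toFinset.sup t :=
        Finset.le_sup ((hfin m).mem_toFinset.mpr hzm)
      have h1 : p ^ ((hfin m).toFinset.sup t)
          = p ^ ((hfin m).toFinset.sup t - t z) * p ^ (t z) := by
        rw [← pow_add]; congr 1; omega
      rw [h1, mul_smul, ht, smul_zero]
    obtain ⟨n, hbdn⟩ := hbd
    exact stmt8.hard p g s hs hgfix n hbdn y hy
end

section
/- Let p be a prime and D a torsion abelian p-group whose p-torsion subgroup D[p] is finite. Let c be an automorphism of D, set D_m = {x ∈ D : c^{p^m}(x) = x} for m ≥ 0, and assume D = ⋃_{m≥0} D_m with each D_m finite. Let M be the inverse limit of the system (D_m) with transition maps D_{m'} → D_m (for m ≤ m') given by x ↦ Σ_{i=0}^{p^{m'−m}−1} c^{i·p^m}(x), realized as the subgroup of Π_m D_m of compatible families; let T be the inverse limit of the system (D[p^n]) with transition maps D[p^{n+1}] → D[p^n] given by multiplication by p, realized as the subgroup of Π_n D[p^n] of compatible families. The automorphism c induces automorphisms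 of M and of T componentwise. Then there exists a group homomorphism ι : M → T with finite kernel and finite cokernel satisfying ι ∘ c = c ∘ ι. -/
private lemma fiber_fin {A : Type*} [AddCommGroup A] {p : ℕ}
    (hp : {x : A | p • x = 0}.Finite) (a : A) : {x : A | p • x = a}.Finite := by
  rcases Set.eq_empty_or_nonempty {x : A | p • x = a} with h | ⟨x₀, hx₀⟩
  · rw [h]; exact Set.finite_empty
  · apply (hp.image (fun z => z + x₀)).subset
    intro x hx
    refine ⟨x - x₀, ?_, sub_add_cancel x x₀⟩
    simp only [Set.mem_setOf_eq] at hx hx₀ ⊢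
    rw [smul_sub, hx, hx₀, sub_self]

private lemma tors_fin {A : Type*} [AddCommGroup A] {p : ℕ}
    (hp : {x : A | p • x = 0}.Finite) (n : ℕ) : {x : A | p ^ n • x = 0}.Finite := by
  induction n with
  | zero => simp only [pow_zero, one_smul]
            exact (Set.finite_singleton (0:A)).subset (fun x hx => hx)
  | succ n ih =>
      apply (Set.Finite.biUnion ih (fun a _ => fiber_fin hp a)).subset
      intro x hx
      simp only [Set.mem_setOf_eq] at hx
      refine Set.mem_biUnion (show p ^ n • (p • x) = 0 from ?_) rfl
      rw [smul_smul, ← pow_succ, hx]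

private lemma pigeon {α : Type*} {s : Set α} (hs : s.Finite) (f : ℕ → α)
    (hf : ∀ j, f j ∈ s) : ∃ a, ∀ j, ∃ j', j ≤ j' ∧ f j' = a := by
  by_contra h
  push_neg at h
  choose b hb using h
  classical
  set J := hs.toFinset.sup b with hJ
  exact hb (f J) J (Finset.le_sup (hs.mem_toFinset.mpr (hf J))) rfl

private lemma fix_pow {A : Type*} [AddCommGroup A] (g : AddAut A) {x : A}
    (h : g x = x) (k : ℕ) : (k • g) x = x := by
  induction k with
  | zero => rfl
  | succ k ih => rw [succ_nsmul, AddAut.add_apply, h, ih]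

private lemma telescope {A : Type*} [AddCommGroup A] (g : AddAut A) (x : A) (K : ℕ) :
    g (∑ i ∈ Finset.range K, (i • g) x) - ∑ i ∈ Finset.range K, (i • g) x
      = (K • g) x - x := by
  have : g (∑ i ∈ Finset.range K, (i • g) x) = ∑ i ∈ Finset.range K, ((i+1) • g) x := by
    rw [map_sum]
    exact Finset.sum_congr rfl (fun i _ => by rw [succ_nsmul', AddAut.add_apply])
  rw [this, ← Finset.sum_sub_distrib,
    Finset.sum_range_sub (fun i => (i • g) x) K]
  simp

private lemma norm_eq {A : Type*} [AddCommGroup A] (g : AddAut A) (x : A) (K : ℕ) :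
    ∃ z : A, ∑ i ∈ Finset.range K, (i • g) x = K • x + (g z - z) := by
  refine ⟨∑ i ∈ Finset.range K, ∑ j ∈ Finset.range i, (j • g) x, ?_⟩
  have h1 : g (∑ i ∈ Finset.range K, ∑ j ∈ Finset.range i, (j • g) x)
      - ∑ i ∈ Finset.range K, ∑ j ∈ Finset.range i, (j • g) x
      = ∑ i ∈ Finset.range K, ((i • g) x - x) := by
    rw [map_sum, ← Finset.sum_sub_distrib]
    exact Finset.sum_congr rfl (fun i _ => telescope g x i)
  rw [h1, Finset.sum_sub_distrib, Finset.sum_const, Finset.card_range]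
  abel


-- p-divisibility of S
private lemma S_pdiv {D : Type*} [AddCommGroup D] {p : ℕ}
    (hDp : {x : D | p • x = 0}.Finite) (d : D) (hd : ∀ j, ∃ e, d = p ^ j • e) :
    ∃ e, p • e = d ∧ ∀ j, ∃ u, e = p ^ j • u := by
  choose u hu using hd
  set f : ℕ → D := fun j => p ^ j • u (j + 1) with hf
  have hfd : ∀ j, p • f j = d := by
    intro j
    rw [hf]
    simp only
    rw [smul_smul, ← pow_succ', ← hu (j + 1)]
  obtain ⟨a, ha⟩ := pigeon (fiber_fin hDp d) f (fun j => hfd j)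
  obtain ⟨j₀, -, hj₀⟩ := ha 0
  refine ⟨a, by rw [← hj₀]; exact hfd j₀, ?_⟩
  intro j
  obtain ⟨j', hjj', hj'⟩ := ha j
  refine ⟨p ^ (j' - j) • u (j' + 1), ?_⟩
  rw [← hj', hf]
  simp only
  rw [smul_smul, ← pow_add, Nat.add_sub_cancel' hjj']

private lemma S_ppow_div {D : Type*} [AddCommGroup D] {p : ℕ}
    (hDp : {x : D | p • x = 0}.Finite) (a : ℕ) (d : D) (hd : ∀ j, ∃ e, d = p ^ j • e) :
    ∃ e, p ^ a • e = d ∧ ∀ j, ∃ u, e = p ^ j • u := by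
  induction a with
  | zero => exact ⟨d, one_smul _ d, hd⟩
  | succ a ih =>
      obtain ⟨e, he, heS⟩ := ih
      obtain ⟨e', he', he'S⟩ := S_pdiv hDp e heS
      exact ⟨e', by rw [pow_succ, mul_smul, he', he], he'S⟩

private lemma S_div {D : Type*} [AddCommGroup D] {p : ℕ} (hp : p.Prime)
    (hDp : {x : D | p • x = 0}.Finite) (htors : ∀ x : D, ∃ n : ℕ, p ^ n • x = 0)
    (k : ℕ) (hk : k ≠ 0) (d : D) (hd : ∀ j, ∃ e, d = p ^ j • e) :
    ∃ s', (∀ j, ∃ w, s' = p ^ j • w) ∧ k • s' = d := by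
  set a := k.factorization p with ha
  set v := k / p ^ a with hv
  have hkeq : p ^ a * v = k := Nat.ordProj_mul_ordCompl_eq_self k p
  have hcop : Nat.Coprime v (p ^ a) := ((Nat.coprime_ordCompl hp hk).symm).pow_right a
  obtain ⟨s₁, hs₁, hs₁S⟩ := S_ppow_div hDp a d hd
  obtain ⟨N, hN⟩ := htors s₁
  have hN1 : p ^ (N + 1) • s₁ = 0 := by rw [pow_succ', mul_smul, hN, smul_zero]
  have hcop' : Nat.Coprime v (p ^ (N + 1)) := ((Nat.coprime_ordCompl hp hk).symm).pow_right _
  have hlt : 1 < p ^ (N + 1) := Nat.one_lt_pow (Nat.succ_ne_zero N) hp.one_lt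
  obtain ⟨w, -, hw⟩ := Nat.exists_mul_mod_eq_one_of_coprime hcop' hlt
  -- v * w = p^(N+1) * q + 1
  have hdiv : v * w = p ^ (N + 1) * (v * w / p ^ (N + 1)) + 1 := by
    conv_lhs => rw [← Nat.div_add_mod (v * w) (p ^ (N + 1))]
    rw [hw]
  refine ⟨w • s₁, ?_, ?_⟩
  · intro j
    obtain ⟨e, he⟩ := hs₁S j
    exact ⟨w • e, by rw [he, smul_comm]⟩
  · rw [← hkeq, mul_smul, smul_smul v w s₁, hdiv, add_smul, one_smul,
      mul_comm (p ^ (N + 1)), mul_smul _ (p ^ (N + 1)), hN1, smul_zero, zero_add, hs₁]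


private lemma aut_pow_comm {A : Type*} [AddCommGroup A] (c : AddAut A) (a b : ℕ) (x : A) :
    (a • c) ((b • c) x) = (b • c) ((a • c) x) := by
  rw [← AddAut.add_apply, ← AddAut.add_apply, ← add_nsmul, add_comm, add_nsmul]

private lemma fix_mono {A : Type*} [AddCommGroup A] (c : AddAut A) (p : ℕ) {m m' : ℕ}
    (h : m ≤ m') {x : A} (hx : ((p ^ m) • c) x = x) : ((p ^ m') • c) x = x := by
  have : (p ^ m') • c = (p ^ (m' - m)) • (p ^ m) • c := by
    rw [smul_smul, ← pow_add, Nat.sub_add_cancel h]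
  rw [this]
  exact fix_pow _ hx _

/-- the subgroup of points fixed by `c ^ p ^ m` -/
private def fixSub {D : Type*} [AddCommGroup D] (g : AddAut D) : AddSubgroup D where
  carrier := {x | g x = x}
  zero_mem' := map_zero g
  add_mem' := by
    intro a b ha hb
    simp only [Set.mem_setOf_eq] at *
    rw [map_add, ha, hb]
  neg_mem' := by
    intro a ha
    simp only [Set.mem_setOf_eq] at *
    rw [map_neg, ha]

/-- the subgroup `S = ⋂ⱼ pʲ D` -/
private def divSub {D : Type*} [AddCommGroup D] (p : ℕ) : AddSubgroup D where
  carrier := {x | ∀ j : ℕ, ∃ e, x = p ^ j • e}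
  zero_mem' := fun j => ⟨0, (smul_zero _).symm⟩
  add_mem' := by
    rintro a b ha hb j
    obtain ⟨e, he⟩ := ha j
    obtain ⟨e', he'⟩ := hb j
    exact ⟨e + e', by rw [he, he', smul_add]⟩
  neg_mem' := by
    rintro a ha j
    obtain ⟨e, he⟩ := ha j
    exact ⟨-e, by rw [he, smul_neg]⟩



private lemma lemA {D : Type*} [AddCommGroup D] {p : ℕ} (hp : p.Prime)
    (hDp : {x : D | p • x = 0}.Finite) (htors : ∀ x : D, ∃ n : ℕ, p ^ n • x = 0)
    (c : AddAut D) (hunion : ∀ x : D, ∃ m : ℕ, ((p ^ m) • c) x = x)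
    (hfin : ∀ m : ℕ, {x : D | ((p ^ m) • c) x = x}.Finite)
    (m : ℕ) (d : D) (hd : ∀ j, ∃ e, d = p ^ j • e) :
    ∃ w, ((p ^ m) • c) w - w = d := by
  classical
  haveI hDmfin : Finite ↥(fixSub ((p ^ m) • c)) := (hfin m).to_subtype
  set k := Nat.card ↥(fixSub ((p ^ m) • c)) with hkdef
  have hk : k ≠ 0 := Nat.card_pos.ne'
  obtain ⟨s', hs'S, hks'⟩ := S_div hp hDp htors k hk d hd
  obtain ⟨m₂, hm₂⟩ := hunion s'
  set m' := max m m₂ with hm'def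
  have hs'fix : ((p ^ m') • c) s' = s' := fix_mono c p (le_max_right m m₂) hm₂
  set G : AddSubgroup D := divSub p ⊓ fixSub ((p ^ m') • c) with hGdef
  haveI hGfin : Finite ↥G := by
    apply Set.Finite.to_subtype
    apply (hfin m').subset
    intro x hx
    exact (AddSubgroup.mem_inf.mp hx).2
  have hmapG : ∀ x : D, x ∈ G → ((p ^ m) • c) x - x ∈ G := by
    intro x hx
    rw [AddSubgroup.mem_inf] at hx ⊢
    obtain ⟨hxS, hxF⟩ := hx
    constructor
    · refine sub_mem ?_ hxS
      intro j
      obtain ⟨e, he⟩ := hxS j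
      exact ⟨((p ^ m) • c) e, by rw [he, map_nsmul]⟩
    · show ((p ^ m') • c) (((p ^ m) • c) x - x) = ((p ^ m) • c) x - x
      rw [map_sub, aut_pow_comm]
      rw [show ((p ^ m') • c) x = x from hxF]
  set φ : ↥G →+ ↥G :=
    { toFun := fun x => ⟨((p ^ m) • c) ↑x - ↑x, hmapG _ x.2⟩
      map_zero' := by ext; simp
      map_add' := by
        intro a b
        ext
        push_cast
        rw [map_add]
        abel } with hφdef
  set H := φ.range with hHdef
  have hc1 : Nat.card ↥G = Nat.card (↥G ⧸ H) * Nat.card ↥H :=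
    AddSubgroup.card_eq_card_quotient_mul_card_addSubgroup H
  have hc2 : Nat.card ↥H = Nat.card (↥G ⧸ φ.ker) :=
    (Nat.card_congr (QuotientAddGroup.quotientKerEquivRange φ).toEquiv).symm
  have hc3 : Nat.card ↥G = Nat.card (↥G ⧸ φ.ker) * Nat.card ↥φ.ker :=
    AddSubgroup.card_eq_card_quotient_mul_card_addSubgroup φ.ker
  have hqpos : 0 < Nat.card (↥G ⧸ φ.ker) := Nat.card_pos
  have hcard : Nat.card (↥G ⧸ H) = Nat.card ↥φ.ker :=
    (Nat.eq_of_mul_eq_mul_left hqpos (by rw [← hc3, hc1, hc2, mul_comm])).symm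
  -- card (ker φ) ∣ k
  have hkermem : ∀ z : ↥φ.ker, ((p ^ m) • c) ((z : ↥G) : D) = ((z : ↥G) : D) := by
    intro z
    have hz : φ ↑z = 0 := AddMonoidHom.mem_ker.mp z.2
    have h2 : ((φ ↑z : ↥G) : D) = 0 := by rw [hz]; rfl
    have h3 : ((p ^ m) • c) ((z : ↥G) : D) - ((z : ↥G) : D) = 0 := h2
    exact sub_eq_zero.mp h3
  set ψ : ↥φ.ker →+ ↥(fixSub ((p ^ m) • c)) :=
    { toFun := fun z => ⟨((z : ↥G) : D), hkermem z⟩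
      map_zero' := by ext; rfl
      map_add' := by intro a b; ext; rfl } with hψdef
  have hinj : Function.Injective ψ := by
    intro a b hab
    have h := congrArg (fun z : ↥(fixSub ((p ^ m) • c)) => (z : D)) hab
    exact Subtype.ext (Subtype.ext h)
  have hdvd : Nat.card (↥G ⧸ H) ∣ k := by
    rw [hcard, hkdef]
    exact AddSubgroup.card_dvd_of_injective ψ hinj
  -- the element s' in G
  have hs'G : s' ∈ G := AddSubgroup.mem_inf.mpr ⟨hs'S, hs'fix⟩
  set x₀ : ↥G := ⟨s', hs'G⟩ with hx₀def
  have hsmul : k • (QuotientAddGroup.mk' H x₀) = 0 := by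
    obtain ⟨t, ht⟩ := hdvd
    rw [ht, mul_comm, mul_smul, card_nsmul_eq_zero', smul_zero]
  have hmem : k • x₀ ∈ H := by
    rw [← QuotientAddGroup.eq_zero_iff]
    rw [← (QuotientAddGroup.mk' H).map_nsmul k x₀] at hsmul
    exact hsmul
  obtain ⟨g, hg⟩ := AddMonoidHom.mem_range.mp hmem
  refine ⟨(g : D), ?_⟩
  have h5 : ((φ g : ↥G) : D) = ((k • x₀ : ↥G) : D) := congrArg Subtype.val hg
  have h6 : ((φ g : ↥G) : D) = ((p ^ m) • c) (g : D) - (g : D) := rfl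
  have h7 : ((k • x₀ : ↥G) : D) = k • s' := by push_cast; rfl
  rw [← h6, h5, h7, hks']





private lemma lemBC {D : Type*} [AddCommGroup D] {p : ℕ}
    (hDp : {x : D | p • x = 0}.Finite) (htors : ∀ x : D, ∃ n : ℕ, p ^ n • x = 0)
    (c : AddAut D) (hunion : ∀ x : D, ∃ m : ℕ, ((p ^ m) • c) x = x) :
    ∃ m₀ : ℕ, ∀ m, m₀ ≤ m → ∀ d : D, ∀ j : ℕ, ∃ e, ((p ^ m) • c) d - d = p ^ j • e := by
  classical
  set S := divSub (D := D) p with hSdef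
  set π := QuotientAddGroup.mk' S with hπdef
  -- p-torsion of the quotient is finite
  have hQp_fin : {xq : D ⧸ S | p • xq = 0}.Finite := by
    apply (hDp.image ⇑π).subset
    intro xq hxq
    obtain ⟨x, rfl⟩ := QuotientAddGroup.mk'_surjective S xq
    have h1 : p • x ∈ S := by
      rw [← QuotientAddGroup.eq_zero_iff (p • x)]
      have : π (p • x) = p • π x := π.map_nsmul p x
      rw [← QuotientAddGroup.mk'_apply, this]
      exact hxq
    obtain ⟨e, he, heS⟩ := S_pdiv hDp (p • x) h1
    refine ⟨x - e, ?_, ?_⟩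
    · show p • (x - e) = 0
      rw [smul_sub, he, sub_self]
    · rw [map_sub]
      have : π e = 0 := (QuotientAddGroup.eq_zero_iff e).mpr heS
      rw [this, sub_zero]
  -- no infinitely p-divisible elements in the quotient
  have hP0 : ∀ xq : D ⧸ S, (∀ j : ℕ, ∃ yq, xq = p ^ j • yq) → xq = 0 := by
    intro xq hxq
    obtain ⟨x, rfl⟩ := QuotientAddGroup.mk'_surjective S xq
    rw [QuotientAddGroup.mk'_apply, QuotientAddGroup.eq_zero_iff]
    intro j
    obtain ⟨yq, hyq⟩ := hxq j
    obtain ⟨y, rfl⟩ := QuotientAddGroup.mk'_surjective S yq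
    have : π (x - p ^ j • y) = 0 := by
      rw [map_sub, map_nsmul, sub_eq_zero]
      exact hyq
    obtain ⟨e, he⟩ := (QuotientAddGroup.eq_zero_iff _).mp this j
    exact ⟨y + e, by rw [smul_add, ← he]; abel⟩
  -- a uniform bound J on divisibility of p-torsion
  have hex : ∀ xq : D ⧸ S, ∃ j : ℕ, (p • xq = 0 ∧ xq ≠ 0) → ¬∃ yq, xq = p ^ j • yq := by
    intro xq
    by_cases h : ∀ j : ℕ, ∃ yq, xq = p ^ j • yq
    · exact ⟨0, fun hc => absurd (hP0 xq h) hc.2⟩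
    · push_neg at h
      obtain ⟨j, hj⟩ := h
      refine ⟨j, fun _ hc => ?_⟩
      obtain ⟨yq, hyq⟩ := hc
      exact hj yq hyq
  choose jf hjf using hex
  set J := hQp_fin.toFinset.sup jf with hJdef
  have hkill : ∀ xq : D ⧸ S, p • xq = 0 → (∃ yq, xq = p ^ J • yq) → xq = 0 := by
    intro xq hp1 hp2
    by_contra hne
    apply hjf xq ⟨hp1, hne⟩
    obtain ⟨yq, hyq⟩ := hp2
    have hle : jf xq ≤ J := Finset.le_sup (hQp_fin.mem_toFinset.mpr hp1)
    refine ⟨p ^ (J - jf xq) • yq, ?_⟩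
    rw [smul_smul, ← pow_add, Nat.add_sub_cancel' hle, ← hyq]
  have hclaim : ∀ k : ℕ, ∀ dq : D ⧸ S, p ^ k • (p ^ J • dq) = 0 → p ^ J • dq = 0 := by
    intro k
    induction k with
    | zero => intro dq h; rwa [pow_zero, one_smul] at h
    | succ k ih =>
        intro dq h
        have hu : p • (p ^ k • (p ^ J • dq)) = 0 := by
          rw [smul_smul, ← pow_succ']
          exact h
        have hu2 : p ^ k • (p ^ J • dq) = p ^ J • (p ^ k • dq) := by
          rw [smul_smul, smul_smul, mul_comm]
        have hu3 : p ^ J • (p ^ k • dq) = 0 :=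
          hkill _ (by rw [← hu2]; exact hu) ⟨p ^ k • dq, rfl⟩
        exact ih dq (by rw [hu2]; exact hu3)
  have hbound : ∀ dq : D ⧸ S, p ^ J • dq = 0 := by
    intro dq
    obtain ⟨k, hk⟩ : ∃ n : ℕ, p ^ n • (p ^ J • dq) = 0 := by
      obtain ⟨x, rfl⟩ := QuotientAddGroup.mk'_surjective S dq
      obtain ⟨n, hn⟩ := htors x
      refine ⟨n, ?_⟩
      have h1 : p ^ n • (p ^ J • (π x)) = π (p ^ n • (p ^ J • x)) := by
        rw [π.map_nsmul (p ^ n) (p ^ J • x), π.map_nsmul (p ^ J) x]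
      rw [show (QuotientAddGroup.mk' S) x = π x from rfl, h1,
        smul_comm (p ^ n) (p ^ J) x, hn, smul_zero, map_zero]
    exact hclaim k dq hk
  -- the quotient is finite
  have hQfin : (Set.univ : Set (D ⧸ S)).Finite := by
    apply (tors_fin hQp_fin J).subset
    intro xq _
    exact hbound xq
  -- representatives
  set R : Set D := Quotient.out '' Set.univ with hRdef
  have hRfin : R.Finite := hQfin.image _
  have hrep : ∀ d : D, ∃ r ∈ R, ∀ j : ℕ, ∃ e, d - r = p ^ j • e := by
    intro d
    refine ⟨Quotient.out (π d), ⟨π d, Set.mem_univ _, rfl⟩, ?_⟩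
    have : π (Quotient.out (π d)) = π d := QuotientAddGroup.out_eq' (π d)
    have h2 : π (d - Quotient.out (π d)) = 0 := by rw [map_sub, this, sub_self]
    exact (QuotientAddGroup.eq_zero_iff _).mp h2
  -- uniformize the fixing index over R
  choose mf hmf using hunion
  set m₀ := hRfin.toFinset.sup mf with hm₀def
  refine ⟨m₀, ?_⟩
  intro m hm d j
  obtain ⟨r, hrR, hrS⟩ := hrep d
  have hrfix : ((p ^ m) • c) r = r := by
    apply fix_mono c p (le_trans (Finset.le_sup (hRfin.mem_toFinset.mpr hrR)) hm)
    exact hmf r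
  obtain ⟨e, he⟩ := hrS j
  refine ⟨((p ^ m) • c) e - e, ?_⟩
  have hd : d = r + (d - r) := by abel
  rw [hd, map_add, smul_sub, ← map_nsmul, ← he, hrfix]
  abel

private lemma qpow {A : Type*} [AddCommGroup A] (c : AddAut A) (p : ℕ) {m m' : ℕ}
    (h : m ≤ m') : (p ^ (m' - m)) • (p ^ m) • c = (p ^ m') • c := by
  rw [smul_smul, ← pow_add, Nat.sub_add_cancel h]

/-- let `D` be a torsion abelian `p`-group with `D[p]` finite and `c` an
automorphism with `D = ⋃_m D_m`, each `D_m = {x : c^(p^m) x = x}` finite.  Let `M` be the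
inverse limit of the `D_m` along the norm maps `x ↦ Σ_{i<p^(m'−m)} c^(i·p^m) x` and `T` the
inverse limit of the `D[pⁿ]` along multiplication by `p` (both realized as groups of
compatible families inside the product `ℕ → D`).  Then there is a homomorphism `ι : M → T`
with finite kernel and finite cokernel commuting with the componentwise action of `c`. -/
theorem stmt9 (p : ℕ) [Fact p.Prime] (D : Type*) [AddCommGroup D]
    (htors : ∀ x : D, ∃ n : ℕ, p ^ n • x = 0)
    (hDp : {x : D | p • x = 0}.Finite)
    (c : AddAut D)
    (hunion : ∀ x : D, ∃ m : ℕ, ((p ^ m) • c) x = x)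
    (hfin : ∀ m : ℕ, {x : D | ((p ^ m) • c) x = x}.Finite)
    (M : AddSubgroup (ℕ → D))
    (hM : (M : Set (ℕ → D)) = {x | (∀ m, ((p ^ m) • c) (x m) = x m) ∧
      ∀ m m' : ℕ, m ≤ m' →
        ∑ i ∈ Finset.range (p ^ (m' - m)), ((i * p ^ m) • c) (x m') = x m})
    (T : AddSubgroup (ℕ → D))
    (hT : (T : Set (ℕ → D)) = {y | (∀ n, p ^ n • y n = 0) ∧ ∀ n, p • y (n + 1) = y n}) :
    ∃ ι : ↥M →+ ↥T,
      Finite ↥ι.ker ∧ Finite (↥T ⧸ ι.range) ∧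
      ∀ x y : ↥M, (∀ m, (y : ℕ → D) m = c ((x : ℕ → D) m)) →
        ∀ n, ((ι y : ↥T) : ℕ → D) n = c (((ι x : ↥T) : ℕ → D) n) := by
  classical
  have hpp : p.Prime := Fact.out
  -- unpack membership in M
  have hMfix : ∀ x : ↥M, ∀ m, ((p ^ m) • c) ((x : ℕ → D) m) = (x : ℕ → D) m := by
    intro x
    have h := x.2
    rw [← SetLike.mem_coe, hM] at h
    exact h.1
  have hMnorm : ∀ (x : ↥M) (m m' : ℕ), m ≤ m' →
      ∑ i ∈ Finset.range (p ^ (m' - m)), (i • (p ^ m) • c) ((x : ℕ → D) m')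
        = (x : ℕ → D) m := by
    intro x m m' h
    have h2 := x.2
    rw [← SetLike.mem_coe, hM] at h2
    rw [← h2.2 m m' h]
    exact Finset.sum_congr rfl (fun i _ => by rw [mul_smul])
  -- exponent killing the fixed subgroups
  have hexp : ∀ m : ℕ, ∃ e : ℕ, ∀ z : D, ((p ^ m) • c) z = z → p ^ e • z = 0 := by
    intro m
    choose nf hnf using htors
    refine ⟨(hfin m).toFinset.sup nf, fun z hz => ?_⟩
    have hle : nf z ≤ (hfin m).toFinset.sup nf :=
      Finset.le_sup ((hfin m).mem_toFinset.mpr hz)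
    rw [← Nat.add_sub_cancel' hle, pow_add, mul_comm, mul_smul, hnf z, smul_zero]
  choose eω hω using hexp
  -- admissible levels
  obtain ⟨m₀, hm₀⟩ := lemBC hDp htors c hunion
  have hμex : ∀ n : ℕ, ∃ m, m₀ ≤ m ∧ ∀ z : D, p ^ n • z = 0 → ((p ^ m) • c) z = z := by
    intro n
    choose mf hmf using hunion
    refine ⟨max m₀ ((tors_fin hDp n).toFinset.sup mf), le_max_left _ _, fun z hz => ?_⟩
    have hle : mf z ≤ max m₀ ((tors_fin hDp n).toFinset.sup mf) :=
      le_trans (Finset.le_sup ((tors_fin hDp n).mem_toFinset.mpr hz)) (le_max_right _ _)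
    exact fix_mono c p hle (hmf z)
  choose μ hμ₀ hμfix using hμex
  -- existence of p^n-divisions of x m for m ≥ m₀
  have htex : ∀ (x : ↥M) (n m : ℕ), m₀ ≤ m → ∃ t, p ^ n • t = (x : ℕ → D) m := by
    intro x n m hm
    obtain ⟨z, hz⟩ := norm_eq ((p ^ m) • c) ((x : ℕ → D) (m + n)) (p ^ n)
    have hnorm := hMnorm x m (m + n) (Nat.le_add_right m n)
    rw [Nat.add_sub_cancel_left] at hnorm
    rw [hz] at hnorm
    obtain ⟨e, he⟩ := hm₀ m hm z n
    exact ⟨(x : ℕ → D) (m + n) + e, by rw [smul_add, ← he, hnorm]⟩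
  choose tt htt using htex
  -- the comparison function
  set F : ↥M → ℕ → D :=
    fun x n => ((p ^ μ n) • c) (tt x n (μ n) (hμ₀ n)) - tt x n (μ n) (hμ₀ n) with hFdef
  -- sum-of-translates operator
  set NN : ℕ → ℕ → D → D :=
    fun m m' t => ∑ i ∈ Finset.range (p ^ (m' - m)), (i • (p ^ m) • c) t with hNNdef
  have hNval : ∀ (m m' : ℕ) (t : D), m ≤ m' →
      ((p ^ m) • c) (NN m m' t) - NN m m' t = ((p ^ m') • c) t - t := by
    intro m m' t h
    rw [hNNdef]
    simp only
    rw [telescope ((p ^ m) • c) t (p ^ (m' - m)), qpow c p h]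
  have hNsmul : ∀ (m m' k : ℕ) (t : D), k • NN m m' t = NN m m' (k • t) := by
    intro m m' k t
    rw [hNNdef]
    simp only
    rw [Finset.smul_sum]
    exact Finset.sum_congr rfl (fun i _ => (map_nsmul _ _ _).symm)
  -- key: value is independent of the choices
  have hVAL : ∀ (x : ↥M) (n m : ℕ) (t : D), m₀ ≤ m →
      (∀ z : D, p ^ n • z = 0 → ((p ^ m) • c) z = z) →
      p ^ n • t = (x : ℕ → D) m →
      ((p ^ m) • c) t - t = F x n := by
    intro x n m t hm hfx ht
    have hm'0 : m₀ ≤ max m (μ n) := le_trans hm (le_max_left _ _)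
    have htt'' : p ^ n • tt x n (max m (μ n)) hm'0 = (x : ℕ → D) (max m (μ n)) :=
      htt x n (max m (μ n)) hm'0
    have step : ∀ mm : ℕ, (∀ z : D, p ^ n • z = 0 → ((p ^ mm) • c) z = z) →
        mm ≤ max m (μ n) → ∀ s : D, p ^ n • s = (x : ℕ → D) mm →
        ((p ^ mm) • c) s - s
          = ((p ^ max m (μ n)) • c) (tt x n (max m (μ n)) hm'0) - tt x n (max m (μ n)) hm'0 := by
      intro mm hfix hmm' s hs
      have h1 : p ^ n • NN mm (max m (μ n)) (tt x n (max m (μ n)) hm'0) = (x : ℕ → D) mm := by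
        rw [hNsmul, htt'']
        exact hMnorm x mm (max m (μ n)) hmm'
      have hdiff : ((p ^ mm) • c) (s - NN mm (max m (μ n)) (tt x n (max m (μ n)) hm'0))
          = s - NN mm (max m (μ n)) (tt x n (max m (μ n)) hm'0) :=
        hfix _ (by rw [smul_sub, hs, h1, sub_self])
      have h3 : ((p ^ mm) • c) s - s
          = ((p ^ mm) • c) (NN mm (max m (μ n)) (tt x n (max m (μ n)) hm'0))
            - NN mm (max m (μ n)) (tt x n (max m (μ n)) hm'0) := by
        have h4 : ((p ^ mm) • c) (s - NN mm (max m (μ n)) (tt x n (max m (μ n)) hm'0))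
            - (s - NN mm (max m (μ n)) (tt x n (max m (μ n)) hm'0))
            = (((p ^ mm) • c) s - s)
              - (((p ^ mm) • c) (NN mm (max m (μ n)) (tt x n (max m (μ n)) hm'0))
                - NN mm (max m (μ n)) (tt x n (max m (μ n)) hm'0)) := by
          rw [map_sub]; abel
        rw [hdiff, sub_self] at h4
        have h5 := sub_eq_zero.mp h4.symm
        exact h5
      rw [h3, hNval mm (max m (μ n)) _ hmm']
    have hL := step m hfx (le_max_left _ _) t ht
    have hR := step (μ n) (hμfix n) (le_max_right _ _) (tt x n (μ n) (hμ₀ n))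
      (htt x n (μ n) (hμ₀ n))
    rw [hL, ← hR]
  -- F x lands in T
  have hmemT : ∀ x : ↥M, F x ∈ T := by
    intro x
    rw [← SetLike.mem_coe, hT]
    simp only [Set.mem_setOf_eq]
    constructor
    · intro n
      show p ^ n • F x n = 0
      have : p ^ n • F x n
          = ((p ^ μ n) • c) (p ^ n • tt x n (μ n) (hμ₀ n)) - p ^ n • tt x n (μ n) (hμ₀ n) := by
        show p ^ n • (((p ^ μ n) • c) (tt x n (μ n) (hμ₀ n)) - tt x n (μ n) (hμ₀ n)) = _
        rw [smul_sub, map_nsmul]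
      rw [this, htt x n (μ n) (hμ₀ n), hMfix x (μ n), sub_self]
    · intro n
      show p • F x (n + 1) = F x n
      have h1 : p • F x (n + 1)
          = ((p ^ μ (n + 1)) • c) (p • tt x (n + 1) (μ (n + 1)) (hμ₀ (n + 1)))
            - p • tt x (n + 1) (μ (n + 1)) (hμ₀ (n + 1)) := by
        show p • (((p ^ μ (n + 1)) • c) (tt x (n + 1) (μ (n + 1)) (hμ₀ (n + 1)))
          - tt x (n + 1) (μ (n + 1)) (hμ₀ (n + 1))) = _
        rw [smul_sub, map_nsmul]
      rw [h1]
      apply hVAL x n (μ (n + 1)) _ (hμ₀ (n + 1))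
      · intro z hz
        apply hμfix (n + 1)
        rw [pow_succ', mul_smul, hz, smul_zero]
      · rw [smul_smul, ← pow_succ, htt x (n + 1) (μ (n + 1)) (hμ₀ (n + 1))]
  -- additivity
  have hadd : ∀ x y : ↥M, F (x + y) = F x + F y := by
    intro x y
    funext n
    have h3 : p ^ n • (tt x n (μ n) (hμ₀ n) + tt y n (μ n) (hμ₀ n))
        = ((x + y : ↥M) : ℕ → D) (μ n) := by
      rw [smul_add, htt x n (μ n) (hμ₀ n), htt y n (μ n) (hμ₀ n)]
      rfl
    have h4 := hVAL (x + y) n (μ n) _ (hμ₀ n) (hμfix n) h3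
    show F (x + y) n = F x n + F y n
    rw [← h4, map_add]
    show _ = (((p ^ μ n) • c) (tt x n (μ n) (hμ₀ n)) - tt x n (μ n) (hμ₀ n))
      + (((p ^ μ n) • c) (tt y n (μ n) (hμ₀ n)) - tt y n (μ n) (hμ₀ n))
    abel
  set ι : ↥M →+ ↥T := AddMonoidHom.mk' (fun x => (⟨F x, hmemT x⟩ : ↥T))
    (fun x y => Subtype.ext (show F (x + y) = F x + F y from hadd x y)) with hιdef
  refine ⟨ι, ?_, ?_, ?_⟩
  · -- trivial kernel
    have hker : ι.ker = ⊥ := by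
      rw [AddSubgroup.eq_bot_iff_forall]
      intro x hx
      have hFx : ∀ n, F x n = 0 := by
        intro n
        have h0 : ((ι x : ↥T) : ℕ → D) = 0 := by
          rw [AddMonoidHom.mem_ker.mp hx]
          rfl
        exact congrFun h0 n
      apply Subtype.ext
      funext mb
      show (x : ℕ → D) mb = 0
      have hm0 : m₀ ≤ max mb (μ (eω mb)) := le_trans (hμ₀ (eω mb)) (le_max_right _ _)
      have hfixm : ∀ z : D, p ^ eω mb • z = 0 → ((p ^ max mb (μ (eω mb))) • c) z = z :=
        fun z hz => fix_mono c p (le_max_right _ _) (hμfix (eω mb) z hz)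
      have hval := hVAL x (eω mb) (max mb (μ (eω mb))) (tt x (eω mb) _ hm0) hm0 hfixm
        (htt x (eω mb) _ hm0)
      rw [hFx (eω mb)] at hval
      have htfix : ((p ^ max mb (μ (eω mb))) • c) (tt x (eω mb) _ hm0) = tt x (eω mb) _ hm0 :=
        sub_eq_zero.mp hval
      have hNfix : ((p ^ mb) • c) (NN mb (max mb (μ (eω mb))) (tt x (eω mb) _ hm0))
          = NN mb (max mb (μ (eω mb))) (tt x (eω mb) _ hm0) := by
        have h5 := hNval mb (max mb (μ (eω mb))) (tt x (eω mb) _ hm0) (le_max_left _ _)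
        rw [sub_eq_zero.mpr htfix] at h5
        exact sub_eq_zero.mp h5
      have hxmb : p ^ eω mb • NN mb (max mb (μ (eω mb))) (tt x (eω mb) _ hm0)
          = (x : ℕ → D) mb := by
        rw [hNsmul, htt x (eω mb) _ hm0]
        exact hMnorm x mb (max mb (μ (eω mb))) (le_max_left _ _)
      rw [← hxmb, hω mb _ hNfix]
    rw [hker]
    have hsub : Subsingleton (↥(⊥ : AddSubgroup ↥M)) :=
      ⟨fun a b => Subtype.ext (by
        rw [AddSubgroup.mem_bot.mp a.2, AddSubgroup.mem_bot.mp b.2])⟩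
    exact @Finite.of_subsingleton _ hsub
  · -- finite cokernel: ι is surjective
    have hrange : ι.range = ⊤ := by
      rw [AddSubgroup.eq_top_iff']
      intro y
      have hy := y.2
      rw [← SetLike.mem_coe, hT] at hy
      obtain ⟨hy1, hy2⟩ := hy
      have hystep : ∀ n k : ℕ, p ^ k • (y : ℕ → D) (n + k) = (y : ℕ → D) n := by
        intro n k
        induction k with
        | zero => rw [Nat.add_zero, pow_zero, one_smul]
        | succ k ih =>
            rw [show n + (k + 1) = (n + k) + 1 from rfl, pow_succ, mul_smul, hy2 (n + k)]
            exact ih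
      have hyS : ∀ n j : ℕ, ∃ e, (y : ℕ → D) n = p ^ j • e :=
        fun n j => ⟨(y : ℕ → D) (n + j), (hystep n j).symm⟩
      choose ww hww using fun m n =>
        lemA hpp hDp htors c hunion hfin m ((y : ℕ → D) n) (fun j => hyS n j)
      set xf : ℕ → D := fun m => p ^ eω m • ww m (eω m) with hxfdef
      have hWpair : ∀ (m n n' : ℕ) (v v' : D), n ≤ n' →
          (∀ z : D, ((p ^ m) • c) z = z → p ^ n • z = 0) →
          ((p ^ m) • c) v - v = (y : ℕ → D) n →
          ((p ^ m) • c) v' - v' = (y : ℕ → D) n' →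
          p ^ n • v = p ^ n' • v' := by
        intro m n n' v v' hnn' hkill hv hv'
        have hv'' : ((p ^ m) • c) (p ^ (n' - n) • v') - p ^ (n' - n) • v' = (y : ℕ → D) n := by
          rw [map_nsmul, ← smul_sub, hv']
          have h6 := hystep n (n' - n)
          rwa [Nat.add_sub_cancel' hnn'] at h6
        have hdiff : ((p ^ m) • c) (v - p ^ (n' - n) • v') = v - p ^ (n' - n) • v' := by
          have h3 : ((p ^ m) • c) (v - p ^ (n' - n) • v') - (v - p ^ (n' - n) • v')
              = (((p ^ m) • c) v - v)
                - (((p ^ m) • c) (p ^ (n' - n) • v') - p ^ (n' - n) • v') := by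
            rw [map_sub]; abel
          rw [hv, hv'', sub_self] at h3
          exact sub_eq_zero.mp h3
        have h4 : p ^ n • (v - p ^ (n' - n) • v') = 0 := hkill _ hdiff
        rw [smul_sub, sub_eq_zero] at h4
        rw [h4, smul_smul, ← pow_add, Nat.add_sub_cancel' hnn']
      have hWVAL : ∀ (m n : ℕ) (v : D), (∀ z : D, ((p ^ m) • c) z = z → p ^ n • z = 0) →
          ((p ^ m) • c) v - v = (y : ℕ → D) n → p ^ n • v = xf m := by
        intro m n v hkill hv
        rcases le_total n (eω m) with h | h
        · exact hWpair m n (eω m) v (ww m (eω m)) h hkill hv (hww m (eω m))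
        · exact (hWpair m (eω m) n (ww m (eω m)) v h (hω m) (hww m (eω m)) hv).symm
      have hxfM : xf ∈ M := by
        rw [← SetLike.mem_coe, hM]
        simp only [Set.mem_setOf_eq]
        constructor
        · intro m
          show ((p ^ m) • c) (p ^ eω m • ww m (eω m)) = p ^ eω m • ww m (eω m)
          rw [map_nsmul, sub_eq_iff_eq_add'.mp (hww m (eω m)), smul_add, hy1 (eω m), add_zero]
        · intro m m' hmm'
          have hsum : ∑ i ∈ Finset.range (p ^ (m' - m)), ((i * p ^ m) • c) (xf m')
              = NN m m' (xf m') :=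
            Finset.sum_congr rfl (fun i _ => by rw [mul_smul])
          rw [hsum]
          show NN m m' (p ^ eω m' • ww m' (eω m')) = xf m
          rw [← hNsmul]
          apply hWVAL m (eω m') (NN m m' (ww m' (eω m')))
          · intro z hz
            exact hω m' z (fix_mono c p hmm' hz)
          · rw [hNval m m' _ hmm']
            exact hww m' (eω m')
      refine ⟨⟨xf, hxfM⟩, ?_⟩
      apply Subtype.ext
      funext n
      show F ⟨xf, hxfM⟩ n = (y : ℕ → D) n
      have hkill2 : ∀ z : D, ((p ^ μ n) • c) z = z → p ^ max n (eω (μ n)) • z = 0 := by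
        intro z hz
        rw [← Nat.sub_add_cancel (le_max_right n (eω (μ n))), pow_add, mul_smul,
          hω (μ n) z hz, smul_zero]
      have hxfm : p ^ max n (eω (μ n)) • ww (μ n) (max n (eω (μ n))) = xf (μ n) :=
        hWVAL (μ n) (max n (eω (μ n))) (ww (μ n) (max n (eω (μ n)))) hkill2
          (hww (μ n) (max n (eω (μ n))))
      have ht9 : p ^ n • (p ^ (max n (eω (μ n)) - n) • ww (μ n) (max n (eω (μ n))))
          = ((⟨xf, hxfM⟩ : ↥M) : ℕ → D) (μ n) := by
        show _ = xf (μ n)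
        rw [smul_smul, ← pow_add, Nat.add_sub_cancel' (le_max_left n (eω (μ n)))]
        exact hxfm
      have h12 := hVAL ⟨xf, hxfM⟩ n (μ n) _ (hμ₀ n) (hμfix n) ht9
      rw [← h12, map_nsmul, ← smul_sub, hww (μ n) (max n (eω (μ n)))]
      have h10 := hystep n (max n (eω (μ n)) - n)
      rwa [Nat.add_sub_cancel' (le_max_left n (eω (μ n)))] at h10
    rw [hrange]
    have hsub : Subsingleton (↥T ⧸ (⊤ : AddSubgroup ↥T)) :=
      QuotientAddGroup.subsingleton_quotient_top
    exact @Finite.of_subsingleton _ hsub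
  · -- equivariance
    intro x y hxy n
    show F y n = c (F x n)
    have hceq : p ^ n • (c (tt x n (μ n) (hμ₀ n))) = (y : ℕ → D) (μ n) := by
      rw [← map_nsmul, htt x n (μ n) (hμ₀ n)]
      exact (hxy (μ n)).symm
    have h11 := hVAL y n (μ n) (c (tt x n (μ n) (hμ₀ n))) (hμ₀ n) (hμfix n) hceq
    have h12 := hVAL x n (μ n) (tt x n (μ n) (hμ₀ n)) (hμ₀ n) (hμfix n)
      (htt x n (μ n) (hμ₀ n))
    rw [← h11, ← h12, map_sub]
    congr 1
    have h13 := aut_pow_comm c (p ^ μ n) 1 (tt x n (μ n) (hμ₀ n))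
    simpa [one_smul] using h13
end
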